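/- arXiv:2406.06882 — 7 statements merged into one kernel-verified Lean document; each statement's English description precedes it below -/
import Mathlib

section
/- Let k ≥ k_0 and suppose p_1,…,p_m are polynomials with p_i ∈ ℝ[x_{Δ_i}] satisfying p_1 + ⋯ + p_m + f_min = 0 and f_i + p_i ∈ Ideal_{Δ_i}[h_i]_{2k} + QM_{Δ_i}[g_i]_{2k} for every i. Then f attains the value f_min on K (i.e., there exists u ∈ K with f(u) = f_min) if and only if there exists u ∈ K with f_i(u) + p_i(u) = 0 for every i ∈ {1,…,m}. -/
open MvPolynomial Pointwise

noncomputable section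

/-- A polynomial is a sum of squares of polynomials supported in `Δ`. -/
def IsSOSIn (n : ℕ) (Δ : Finset (Fin n)) (σ : MvPolynomial (Fin n) ℝ) : Prop :=
  ∃ (r : ℕ) (p : Fin r → MvPolynomial (Fin n) ℝ),
    (∀ l, p l ∈ MvPolynomial.supported ℝ (↑Δ : Set (Fin n))) ∧ σ = ∑ l, p l ^ 2

/-- Degree-`2k` truncation `Ideal_{Δ}[h]_{2k}`. -/
def IdealTrunc (n : ℕ) (Δ : Finset (Fin n)) {ℓ : ℕ}
    (h : Fin ℓ → MvPolynomial (Fin n) ℝ) (k : ℕ) : Set (MvPolynomial (Fin n) ℝ) :=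
  { q | ∃ φ : Fin ℓ → MvPolynomial (Fin n) ℝ,
      (∀ j, φ j ∈ MvPolynomial.supported ℝ (↑Δ : Set (Fin n))) ∧
      (∀ j, (φ j * h j).totalDegree ≤ 2 * k) ∧ q = ∑ j, φ j * h j }

/-- Degree-`2k` truncation `QM_{Δ}[g]_{2k}`. -/
def QMTrunc (n : ℕ) (Δ : Finset (Fin n)) {s : ℕ}
    (g : Fin s → MvPolynomial (Fin n) ℝ) (k : ℕ) : Set (MvPolynomial (Fin n) ℝ) :=
  { q | ∃ (σ₀ : MvPolynomial (Fin n) ℝ) (σ : Fin s → MvPolynomial (Fin n) ℝ),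
      IsSOSIn n Δ σ₀ ∧ (∀ j, IsSOSIn n Δ (σ j)) ∧
      σ₀.totalDegree ≤ 2 * k ∧ (∀ j, (σ j * g j).totalDegree ≤ 2 * k) ∧
      q = σ₀ + ∑ j, σ j * g j }

/-- The Minkowski sum `G_1 + ⋯ + G_m` of a family of subsets of `ℝ[x]`. -/
def SpaSum {n m : ℕ} (G : Fin m → Set (MvPolynomial (Fin n) ℝ)) :
    Set (MvPolynomial (Fin n) ℝ) :=
  { q | ∃ t : Fin m → MvPolynomial (Fin n) ℝ, (∀ i, t i ∈ G i) ∧ q = ∑ i, t i }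

section Certificates

variable {n : ℕ} {Δ : Finset (Fin n)} {k : ℕ} {q : MvPolynomial (Fin n) ℝ} {x : Fin n → ℝ}

theorem IsSOSIn.eval_nonneg (hq : IsSOSIn n Δ q) (x : Fin n → ℝ) : 0 ≤ eval x q := by
  obtain ⟨r, w, -, rfl⟩ := hq
  simp only [map_sum, map_pow]
  exact Finset.sum_nonneg fun l _ => sq_nonneg _

theorem eval_eq_zero_of_mem_idealTrunc {ℓ : ℕ} {h : Fin ℓ → MvPolynomial (Fin n) ℝ}
    (hq : q ∈ IdealTrunc n Δ h k) (hx : ∀ j, eval x (h j) = 0) : eval x q = 0 := by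
  obtain ⟨φ, -, -, rfl⟩ := hq
  simp [hx]

theorem eval_nonneg_of_mem_qmTrunc {s : ℕ} {g : Fin s → MvPolynomial (Fin n) ℝ}
    (hq : q ∈ QMTrunc n Δ g k) (hx : ∀ j, 0 ≤ eval x (g j)) : 0 ≤ eval x q := by
  obtain ⟨σ₀, σ, hσ₀, hσ, -, -, rfl⟩ := hq
  simp only [map_add, map_sum, map_mul]
  exact add_nonneg (hσ₀.eval_nonneg x)
    (Finset.sum_nonneg fun j _ => mul_nonneg ((hσ j).eval_nonneg x) (hx j))

theorem eval_nonneg_of_mem_idealTrunc_add_qmTrunc {ℓ s : ℕ}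
    {h : Fin ℓ → MvPolynomial (Fin n) ℝ} {g : Fin s → MvPolynomial (Fin n) ℝ}
    (hq : q ∈ IdealTrunc n Δ h k + QMTrunc n Δ g k)
    (hxh : ∀ j, eval x (h j) = 0) (hxg : ∀ j, 0 ≤ eval x (g j)) : 0 ≤ eval x q := by
  obtain ⟨a, ha, b, hb, rfl⟩ := Set.mem_add.mp hq
  rw [map_add, eval_eq_zero_of_mem_idealTrunc ha hxh, zero_add]
  exact eval_nonneg_of_mem_qmTrunc hb hxg

end Certificates

theorem stmt_3_general
    (n m : ℕ)
    (Δ : Fin m → Finset (Fin n))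
    (ℓ s : Fin m → ℕ)
    (f : Fin m → MvPolynomial (Fin n) ℝ)
    (h : (i : Fin m) → Fin (ℓ i) → MvPolynomial (Fin n) ℝ)
    (g : (i : Fin m) → Fin (s i) → MvPolynomial (Fin n) ℝ)
    (K : Set (Fin n → ℝ))
    (hKdef : K = { x | (∀ i j, MvPolynomial.eval x (h i j) = 0) ∧
        (∀ i j, 0 ≤ MvPolynomial.eval x (g i j)) })
    (fmin : ℝ)
    (k : ℕ)
    (p : Fin m → MvPolynomial (Fin n) ℝ)
    (hpsum : (∑ i, p i) + MvPolynomial.C fmin = 0)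
    (hpmem : ∀ i, f i + p i ∈ IdealTrunc n (Δ i) (h i) k + QMTrunc n (Δ i) (g i) k) :
    (∃ u ∈ K, MvPolynomial.eval u (∑ i, f i) = fmin) ↔
      ∃ u ∈ K, ∀ i, MvPolynomial.eval u (f i) + MvPolynomial.eval u (p i) = 0 := by
  -- On `K` the gap `f - fmin` splits into the nonnegative local terms `f i + p i`.
  have hgap : ∀ u, ∑ i, (eval u (f i) + eval u (p i)) = eval u (∑ i, f i) - fmin := by
    intro u
    have hp := congrArg (eval u) hpsum
    simp only [map_add, map_sum, map_zero, eval_C] at hp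
    rw [Finset.sum_add_distrib, map_sum]
    linarith
  have hnonneg : ∀ u ∈ K, ∀ i, 0 ≤ eval u (f i) + eval u (p i) := by
    rintro u hu i
    rw [hKdef] at hu
    simpa only [map_add] using
      eval_nonneg_of_mem_idealTrunc_add_qmTrunc (hpmem i) (hu.1 i) (hu.2 i)
  refine exists_congr fun u => and_congr_right fun hu => ?_
  rw [← sub_eq_zero, ← hgap, Finset.sum_eq_zero_iff_of_nonneg fun i _ => hnonneg u hu i]
  simp only [Finset.mem_univ, true_implies]

theorem stmt_3
    (n m : ℕ) (hn : 1 ≤ n) (hm : 1 ≤ m)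
    (Δ : Fin m → Finset (Fin n))
    (ℓ s : Fin m → ℕ)
    (f : Fin m → MvPolynomial (Fin n) ℝ)
    (h : (i : Fin m) → Fin (ℓ i) → MvPolynomial (Fin n) ℝ)
    (g : (i : Fin m) → Fin (s i) → MvPolynomial (Fin n) ℝ)
    (hf : ∀ i, f i ∈ MvPolynomial.supported ℝ (↑(Δ i) : Set (Fin n)))
    (hh : ∀ i j, h i j ∈ MvPolynomial.supported ℝ (↑(Δ i) : Set (Fin n)))
    (hg : ∀ i j, g i j ∈ MvPolynomial.supported ℝ (↑(Δ i) : Set (Fin n)))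
    (K : Set (Fin n → ℝ))
    (hKdef : K = { x | (∀ i j, MvPolynomial.eval x (h i j) = 0) ∧
        (∀ i j, 0 ≤ MvPolynomial.eval x (g i j)) })
    (fmin : ℝ)
    (hfmin : IsGLB ((fun x => MvPolynomial.eval x (∑ i, f i)) '' K) fmin)
    (k : ℕ)
    -- `k ≥ k₀`:
    (hkf : (∑ i, f i).totalDegree ≤ 2 * k)
    (hkh : ∀ i j, (h i j).totalDegree ≤ 2 * k)
    (hkg : ∀ i j, (g i j).totalDegree ≤ 2 * k)
    (p : Fin m → MvPolynomial (Fin n) ℝ)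
    (hp : ∀ i, p i ∈ MvPolynomial.supported ℝ (↑(Δ i) : Set (Fin n)))
    (hpsum : (∑ i, p i) + MvPolynomial.C fmin = 0)
    (hpmem : ∀ i, f i + p i ∈ IdealTrunc n (Δ i) (h i) k + QMTrunc n (Δ i) (g i) k) :
    (∃ u ∈ K, MvPolynomial.eval u (∑ i, f i) = fmin) ↔
      ∃ u ∈ K, ∀ i, MvPolynomial.eval u (f i) + MvPolynomial.eval u (p i) = 0 :=
  stmt_3_general n m Δ ℓ s f h g K hKdef fmin k p hpsum hpmem
end
end

section
/- Let k ≥ k_0 and let y : (Fin n →₀ ℕ) → ℝ be feasible for the order-k sparse moment relaxation. Suppose there is t ∈ ℕ with k_0 ≤ t ≤ k such that: (a) for each i ∈ {1,…,m} there exist r_i ≥ 1, points u^{(i,1)},…,u^{(i,r_i)} ∈ K_{Δ_i} and reals λ_{i,1},…,λ_{i,r_i} > 0 with λ_{i,1} + ⋯ + λ_{i,r_i} = 1 and L_y(q) = Σ_{j=1}^{r_i} λ_{i,j}·q(u^{(i,j)}) for every q ∈ ℝ[x_{Δ_i}] with totalDegree(q) ≤ 2t; and (b) L_{y'}(f) ≥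 L_y(f) for every y' feasible for the order-t sparse moment relaxation (so y is a minimizer and f_t^{smo} = f_k^{smo}). Then every point x* ∈ ℝ^n such that, for each i, there exists j with x*_l = (u^{(i,j)})_l for all l ∈ Δ_i, is a global minimizer of f over K: x* ∈ K and f(x*) ≤ f(x) for all x ∈ K. -/
open MvPolynomial

noncomputable section

/-- The Riesz functional `L_y` sending `x^α` to `y α`, extended linearly. -/
def Riesz (n : ℕ) (y : (Fin n →₀ ℕ) → ℝ) (p : MvPolynomial (Fin n) ℝ) : ℝ :=
  ∑ α ∈ p.support, MvPolynomial.coeff α p * y α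

/-- Feasibility of `y` for the order-`k` sparse moment relaxation. -/
def MomFeas (n m : ℕ) (Δ : Fin m → Finset (Fin n)) {ℓ s : Fin m → ℕ}
    (h : (i : Fin m) → Fin (ℓ i) → MvPolynomial (Fin n) ℝ)
    (g : (i : Fin m) → Fin (s i) → MvPolynomial (Fin n) ℝ)
    (k : ℕ) (y : (Fin n →₀ ℕ) → ℝ) : Prop :=
  y 0 = 1 ∧
  (∀ (i : Fin m) (j : Fin (ℓ i)) (q : MvPolynomial (Fin n) ℝ),
      q ∈ MvPolynomial.supported ℝ (↑(Δ i) : Set (Fin n)) →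
      (h i j * q).totalDegree ≤ 2 * k → Riesz n y (h i j * q) = 0) ∧
  (∀ (i : Fin m) (p : MvPolynomial (Fin n) ℝ),
      p ∈ MvPolynomial.supported ℝ (↑(Δ i) : Set (Fin n)) →
      p.totalDegree ≤ k → 0 ≤ Riesz n y (p ^ 2)) ∧
  (∀ (i : Fin m) (j : Fin (s i)) (p : MvPolynomial (Fin n) ℝ),
      p ∈ MvPolynomial.supported ℝ (↑(Δ i) : Set (Fin n)) →
      (g i j * p ^ 2).totalDegree ≤ 2 * k → 0 ≤ Riesz n y (g i j * p ^ 2))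

lemma riesz_sum (n : ℕ) (x : Fin n → ℝ) (p : MvPolynomial (Fin n) ℝ) :
    ∑ α ∈ p.support, MvPolynomial.coeff α p * MvPolynomial.eval x (MvPolynomial.monomial α 1)
      = MvPolynomial.eval x p := by
  rw [MvPolynomial.eval_eq]
  refine Finset.sum_congr rfl fun α _ => ?_
  rw [MvPolynomial.eval_monomial, one_mul, Finsupp.prod]

lemma riesz_dirac (n : ℕ) (x : Fin n → ℝ) (p : MvPolynomial (Fin n) ℝ) :
    Riesz n (fun α => MvPolynomial.eval x (MvPolynomial.monomial α 1)) p
      = MvPolynomial.eval x p := riesz_sum n x p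

lemma eval_congr_supp {n : ℕ} {Δ : Finset (Fin n)} {p : MvPolynomial (Fin n) ℝ}
    (hp : p ∈ MvPolynomial.supported ℝ (↑Δ : Set (Fin n))) {x x' : Fin n → ℝ}
    (hxx : ∀ l ∈ Δ, x l = x' l) :
    MvPolynomial.eval x p = MvPolynomial.eval x' p := by
  rw [MvPolynomial.eval_eq, MvPolynomial.eval_eq]
  refine Finset.sum_congr rfl fun d hd => ?_
  congr 1
  refine Finset.prod_congr rfl fun i hi => ?_
  have hv : i ∈ p.vars := (MvPolynomial.mem_vars i).2 ⟨d, hd, hi⟩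
  rw [hxx i (Finset.mem_coe.1 ((MvPolynomial.mem_supported.1 hp) hv))]

theorem stmt_5
    (n m : ℕ) (hn : 1 ≤ n) (hm : 1 ≤ m)
    (Δ : Fin m → Finset (Fin n))
    (ℓ s : Fin m → ℕ)
    (f : Fin m → MvPolynomial (Fin n) ℝ)
    (h : (i : Fin m) → Fin (ℓ i) → MvPolynomial (Fin n) ℝ)
    (g : (i : Fin m) → Fin (s i) → MvPolynomial (Fin n) ℝ)
    (hf : ∀ i, f i ∈ MvPolynomial.supported ℝ (↑(Δ i) : Set (Fin n)))
    (hh : ∀ i j, h i j ∈ MvPolynomial.supported ℝ (↑(Δ i) : Set (Fin n)))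
    (hg : ∀ i j, g i j ∈ MvPolynomial.supported ℝ (↑(Δ i) : Set (Fin n)))
    (K : Set (Fin n → ℝ))
    (hKdef : K = { x | (∀ i j, MvPolynomial.eval x (h i j) = 0) ∧
        (∀ i j, 0 ≤ MvPolynomial.eval x (g i j)) })
    (KΔ : Fin m → Set (Fin n → ℝ))
    (hKΔdef : ∀ i, KΔ i = { x | (∀ j, MvPolynomial.eval x (h i j) = 0) ∧
        (∀ j, 0 ≤ MvPolynomial.eval x (g i j)) })
    (k t : ℕ) (htk : t ≤ k)
    -- `t ≥ k₀` (hence also `k ≥ k₀`):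
    (htf : (∑ i, f i).totalDegree ≤ 2 * t)
    (hth : ∀ i j, (h i j).totalDegree ≤ 2 * t)
    (htg : ∀ i j, (g i j).totalDegree ≤ 2 * t)
    (y : (Fin n →₀ ℕ) → ℝ)
    (hy : MomFeas n m Δ h g k y)
    -- (a): atomic representation of the degree-2t truncations of each `y_{Δ_i}`
    (r : Fin m → ℕ) (hr : ∀ i, 1 ≤ r i)
    (u : (i : Fin m) → Fin (r i) → (Fin n → ℝ))
    (lam : (i : Fin m) → Fin (r i) → ℝ)
    (hu : ∀ i j, u i j ∈ KΔ i)
    (hlam : ∀ i j, 0 < lam i j)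
    (hlam1 : ∀ i, (∑ j, lam i j) = 1)
    (hrep : ∀ i, ∀ q ∈ MvPolynomial.supported ℝ (↑(Δ i) : Set (Fin n)),
        q.totalDegree ≤ 2 * t →
        Riesz n y q = ∑ j, lam i j * MvPolynomial.eval (u i j) q)
    -- (b): `y` is a minimizer and `f_t^{smo} = f_k^{smo}`
    (hmin : ∀ y' : (Fin n →₀ ℕ) → ℝ, MomFeas n m Δ h g t y' →
        Riesz n y (∑ i, f i) ≤ Riesz n y' (∑ i, f i)) :
    ∀ xstar : Fin n → ℝ,
      (∀ i, ∃ j, ∀ l ∈ Δ i, xstar l = u i j l) →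
      xstar ∈ K ∧ ∀ x ∈ K,
        MvPolynomial.eval xstar (∑ i, f i) ≤ MvPolynomial.eval x (∑ i, f i) := by
  intro xstar hxs
  choose j hj using hxs
  have hev : ∀ (i : Fin m) (p : MvPolynomial (Fin n) ℝ),
      p ∈ MvPolynomial.supported ℝ (↑(Δ i) : Set (Fin n)) →
      MvPolynomial.eval xstar p = MvPolynomial.eval (u i (j i)) p :=
    fun i p hp => eval_congr_supp hp (hj i)
  have huK : ∀ (i : Fin m) (j' : Fin (r i)),
      (∀ j2, MvPolynomial.eval (u i j') (h i j2) = 0) ∧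
      (∀ j2, 0 ≤ MvPolynomial.eval (u i j') (g i j2)) := by
    intro i j'
    have := hu i j'
    rw [hKΔdef i] at this
    exact this
  have hxK : xstar ∈ K := by
    rw [hKdef]
    exact ⟨fun i j' => by rw [hev i _ (hh i j')]; exact (huK i (j i)).1 j',
           fun i j' => by rw [hev i _ (hg i j')]; exact (huK i (j i)).2 j'⟩
  refine ⟨hxK, ?_⟩
  intro x hxmem
  -- the weight `c`
  have hmne : (Finset.univ : Finset (Fin m)).Nonempty := ⟨⟨0, hm⟩, Finset.mem_univ _⟩
  set c0 : ℝ := Finset.univ.inf' hmne (fun i => lam i (j i)) with hc0def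
  have hc0pos : 0 < c0 := by
    rw [hc0def, Finset.lt_inf'_iff]
    exact fun i _ => hlam i (j i)
  set c : ℝ := c0 / 2 with hcdef
  have hcpos : 0 < c := by positivity
  have hcle : ∀ i, c ≤ lam i (j i) := by
    intro i
    have h1 : c0 ≤ lam i (j i) := Finset.inf'_le _ (Finset.mem_univ i)
    rw [hcdef]; linarith
  have hc1 : c < 1 := by
    have h1 : c0 ≤ lam ⟨0, hm⟩ (j ⟨0, hm⟩) := Finset.inf'_le _ (Finset.mem_univ _)
    have h2 : lam ⟨0, hm⟩ (j ⟨0, hm⟩) ≤ 1 := by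
      rw [← hlam1 ⟨0, hm⟩]
      exact Finset.single_le_sum (fun j' _ => (hlam _ j').le) (Finset.mem_univ _)
    rw [hcdef]; linarith
  have h1c : (0:ℝ) < 1 - c := by linarith
  -- the perturbed functional y2
  set y2 : (Fin n →₀ ℕ) → ℝ :=
    fun α => (y α - c * MvPolynomial.eval xstar (MvPolynomial.monomial α 1)) / (1 - c)
    with hy2def
  have hR : ∀ p : MvPolynomial (Fin n) ℝ,
      Riesz n y2 p = (Riesz n y p - c * MvPolynomial.eval xstar p) / (1 - c) := by
    intro p
    simp only [Riesz, hy2def]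
    rw [← riesz_sum n xstar p, Finset.mul_sum, ← Finset.sum_sub_distrib, Finset.sum_div]
    refine Finset.sum_congr rfl fun α _ => ?_
    field_simp
  have hfeas2 : MomFeas n m Δ h g t y2 := by
    refine ⟨?_, ?_, ?_, ?_⟩
    · show (y 0 - c * MvPolynomial.eval xstar (MvPolynomial.monomial 0 1)) / (1 - c) = 1
      have he1 : MvPolynomial.eval xstar (MvPolynomial.monomial (0 : Fin n →₀ ℕ) (1:ℝ)) = 1 := by
        simp [MvPolynomial.eval_monomial]
      rw [he1, hy.1]
      field_simp
    · intro i j' q hq hdeg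
      rw [hR]
      have h0 : Riesz n y (h i j' * q) = 0 := hy.2.1 i j' q hq (hdeg.trans (by omega))
      have he : MvPolynomial.eval xstar (h i j' * q) = 0 := by
        rw [map_mul, hev i _ (hh i j'), (huK i (j i)).1 j', zero_mul]
      rw [h0, he]
      simp
    · intro i p hp hdeg
      rw [hR]
      apply div_nonneg _ h1c.le
      rw [sub_nonneg]
      have hmem : p ^ 2 ∈ MvPolynomial.supported ℝ (↑(Δ i) : Set (Fin n)) := pow_mem hp 2
      have hdeg2 : (p ^ 2).totalDegree ≤ 2 * t := by
        have := MvPolynomial.totalDegree_pow p 2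
        omega
      rw [hrep i (p ^ 2) hmem hdeg2, hev i _ hmem]
      have hE : (0:ℝ) ≤ MvPolynomial.eval (u i (j i)) (p ^ 2) := by
        rw [map_pow]; positivity
      calc c * MvPolynomial.eval (u i (j i)) (p ^ 2)
          ≤ lam i (j i) * MvPolynomial.eval (u i (j i)) (p ^ 2) :=
            mul_le_mul_of_nonneg_right (hcle i) hE
        _ ≤ ∑ j', lam i j' * MvPolynomial.eval (u i j') (p ^ 2) := by
            refine Finset.single_le_sum
              (f := fun j' => lam i j' * MvPolynomial.eval (u i j') (p ^ 2))
              (fun j' _ => ?_) (Finset.mem_univ (j i))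
            have : (0:ℝ) ≤ MvPolynomial.eval (u i j') (p ^ 2) := by rw [map_pow]; positivity
            exact mul_nonneg (hlam i j').le this
    · intro i j' p hp hdeg
      rw [hR]
      apply div_nonneg _ h1c.le
      rw [sub_nonneg]
      have hmem : g i j' * p ^ 2 ∈ MvPolynomial.supported ℝ (↑(Δ i) : Set (Fin n)) :=
        mul_mem (hg i j') (pow_mem hp 2)
      rw [hrep i _ hmem hdeg, hev i _ hmem]
      have hterm : ∀ j2, (0:ℝ) ≤ MvPolynomial.eval (u i j2) (g i j' * p ^ 2) := by
        intro j2
        rw [map_mul, map_pow]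
        exact mul_nonneg ((huK i j2).2 j') (by positivity)
      calc c * MvPolynomial.eval (u i (j i)) (g i j' * p ^ 2)
          ≤ lam i (j i) * MvPolynomial.eval (u i (j i)) (g i j' * p ^ 2) :=
            mul_le_mul_of_nonneg_right (hcle i) (hterm (j i))
        _ ≤ ∑ j2, lam i j2 * MvPolynomial.eval (u i j2) (g i j' * p ^ 2) :=
            Finset.single_le_sum
              (f := fun j2 => lam i j2 * MvPolynomial.eval (u i j2) (g i j' * p ^ 2))
              (fun j2 _ => mul_nonneg (hlam i j2).le (hterm j2))
              (Finset.mem_univ (j i))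
  -- optimality against y2 gives f(xstar) ≤ L_y f
  have hlow := hmin y2 hfeas2
  rw [hR] at hlow
  have hxs_le : MvPolynomial.eval xstar (∑ i, f i) ≤ Riesz n y (∑ i, f i) := by
    set A := Riesz n y (∑ i, f i)
    set B := MvPolynomial.eval xstar (∑ i, f i)
    have h2 : A * (1 - c) ≤ A - c * B := (le_div_iff₀ h1c).1 hlow
    nlinarith
  -- Dirac at x is feasible at order t, so L_y f ≤ f(x)
  have hxKm : (∀ i j2, MvPolynomial.eval x (h i j2) = 0) ∧
      (∀ i j2, 0 ≤ MvPolynomial.eval x (g i j2)) := by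
    rw [hKdef] at hxmem; exact hxmem
  have hfeasx : MomFeas n m Δ h g t
      (fun α => MvPolynomial.eval x (MvPolynomial.monomial α 1)) := by
    refine ⟨by simp [MvPolynomial.eval_monomial], ?_, ?_, ?_⟩
    · intro i j2 q hq hdeg
      rw [riesz_dirac, map_mul, hxKm.1 i j2, zero_mul]
    · intro i p hp hdeg
      rw [riesz_dirac, map_pow]
      positivity
    · intro i j2 p hp hdeg
      rw [riesz_dirac, map_mul, map_pow]
      exact mul_nonneg (hxKm.2 i j2) (by positivity)
  have hup := hmin _ hfeasx
  rw [riesz_dirac] at hup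
  linarith
end
end

section
/- Suppose each h_{i,j} has totalDegree ≤ 1, each function x ↦ f_i(x) is convex on ℝ^n, and each function x ↦ g_{i,j}(x) is concave on ℝ^n. Let u ∈ K be a global minimizer of f on K (f(u) ≤ f(x) for all x ∈ K) and suppose the first-order KKT conditions hold at u: there exist reals λ_{i,j} ≥ 0 (i ∈ {1,…,m}, j ∈ {1,…,s_i}) and ν_{i,j} ∈ ℝ (j ∈ {1,…,ℓ_i}) such that Σ_{i=1}^m ∇f_i(u) = Σ_{i=1}^m [Σ_{j=1}^{s_i} λ_{i,j} ∇g_{i,j}(u) + Σ_{j=1}^{ℓ_i} ν_{i,j} ∇h_{i,j}(u)] and λ_{i,j}·g_{i,j}(u) = 0 for all i, j. Then there exist polynomials p_1,…,p_m with p_i ∈ ℝ[x_{Δ_i}] such that p_1 + ⋯ + p_m + f(u) = 0 and f_i + p_i ≥ 0 at every point of K_{Δ_i}, for each i. -/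
open MvPolynomial

noncomputable section

open Finset

lemma aux_hasDerivAt_eval_line {n : ℕ} (u v : Fin n → ℝ) (P : MvPolynomial (Fin n) ℝ) (t : ℝ) :
    HasDerivAt (fun s : ℝ => eval (u + s • v) P)
      (∑ l, eval (u + t • v) (pderiv l P) * v l) t := by
  classical
  induction P using MvPolynomial.induction_on with
  | C a => simpa using hasDerivAt_const t a
  | add p q hp hq =>
      simpa [map_add, add_mul, Finset.sum_add_distrib] using hp.fun_add hq
  | mul_X p i hp =>
      have hX : HasDerivAt (fun s : ℝ => (u + s • v) i) (v i) t := by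
        simpa [Pi.add_apply, Pi.smul_apply, smul_eq_mul] using
          ((hasDerivAt_id t).mul_const (v i)).const_add (u i)
      have h2 := hp.fun_mul hX
      have hfun : (fun s : ℝ => eval (u + s • v) p * (u + s • v) i)
          = fun s : ℝ => eval (u + s • v) (p * X i) := by funext s; simp
      rw [hfun] at h2
      refine h2.congr_deriv (Eq.symm ?_)
      simp only [pderiv_mul, map_add, eval_mul, eval_X, add_mul, Finset.sum_add_distrib]
      congr 1
      · rw [Finset.sum_mul]
        exact Finset.sum_congr rfl fun l _ => by ring
      · rw [Finset.sum_eq_single i]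
        · simp
        · intro l _ hl
          rw [pderiv_X_of_ne (Ne.symm hl)]
          simp
        · simp

lemma aux_convex_grad_ineq {n : ℕ} (P : MvPolynomial (Fin n) ℝ)
    (hc : ConvexOn ℝ Set.univ (fun y : Fin n → ℝ => eval y P)) (u x : Fin n → ℝ) :
    eval u P + ∑ l, eval u (pderiv l P) * (x l - u l) ≤ eval x P := by
  set v : Fin n → ℝ := x - u with hv
  have hphi : ConvexOn ℝ Set.univ (fun t : ℝ => eval (u + t • v) P) := by
    have h1 := hc.comp_affineMap (AffineMap.lineMap u x)
    have h2 : (fun t : ℝ => eval (u + t • v) P)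
        = ((fun y => eval y P) ∘ (AffineMap.lineMap u x : ℝ →ᵃ[ℝ] (Fin n → ℝ))) := by
      funext t
      simp only [Function.comp_apply]
      congr 1
      simp [AffineMap.lineMap_apply, hv, vsub_eq_sub, vadd_eq_add]
      abel
    rw [h2]
    simpa using h1
  have hd := aux_hasDerivAt_eval_line u v P 0
  have hzero : u + (0:ℝ) • v = u := by simp
  rw [hzero] at hd
  have hslope := hphi.le_slope_of_hasDerivAt (Set.mem_univ 0) (Set.mem_univ 1) one_pos hd
  rw [slope_def_field] at hslope
  have h1 : u + (1:ℝ) • v = x := by simp [hv]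
  rw [h1, hzero] at hslope
  simp only [hv, Pi.sub_apply] at *
  linarith [hslope]

lemma aux_finsupp_le_one {n : ℕ} (d : Fin n →₀ ℕ) (hd : (d.sum fun _ e => e) ≤ 1) :
    d = 0 ∨ ∃ k, d = Finsupp.single k 1 := by
  rcases Nat.le_one_iff_eq_zero_or_eq_one.mp hd with h0 | h1
  · left
    ext k
    by_cases hk : k ∈ d.support
    · exact (Finset.sum_eq_zero_iff.mp h0 k hk)
    · simpa using Finsupp.notMem_support_iff.mp hk
  · right
    have hne : d.support.Nonempty := by
      by_contra hcon
      rw [Finset.not_nonempty_iff_eq_empty] at hcon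
      rw [Finsupp.sum, hcon] at h1
      simp at h1
    obtain ⟨k, hk⟩ := hne
    refine ⟨k, ?_⟩
    have hk1 : 1 ≤ d k := Nat.one_le_iff_ne_zero.mpr (Finsupp.mem_support_iff.mp hk)
    have hle : d k ≤ d.sum fun _ e => e := Finset.single_le_sum (fun _ _ => Nat.zero_le _) hk
    have hdk : d k = 1 := le_antisymm (hle.trans h1.le) hk1
    have hrest : ∑ j ∈ d.support.erase k, d j = 0 := by
      have := Finset.add_sum_erase d.support d hk
      rw [Finsupp.sum] at h1
      omega
    ext j
    rcases eq_or_ne j k with rfl | hjk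
    · simp [hdk]
    · rw [Finsupp.single_apply, if_neg (Ne.symm hjk)]
      by_cases hj : j ∈ d.support
      · exact Finset.sum_eq_zero_iff.mp hrest j (Finset.mem_erase.mpr ⟨hjk, hj⟩)
      · simpa using Finsupp.notMem_support_iff.mp hj

lemma aux_eval_affine {n : ℕ} (P : MvPolynomial (Fin n) ℝ) (hP : P.totalDegree ≤ 1)
    (u x : Fin n → ℝ) :
    eval x P = eval u P + ∑ l, eval u (pderiv l P) * (x l - u l) := by
  classical
  have key : ∀ d ∈ P.support, ∀ a : ℝ,
      eval x (monomial d a) =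
        eval u (monomial d a) + ∑ l, eval u (pderiv l (monomial d a)) * (x l - u l) := by
    intro d hd a
    have hdeg : (d.sum fun _ e => e) ≤ 1 := (le_totalDegree hd).trans hP
    rcases aux_finsupp_le_one d hdeg with rfl | ⟨k, rfl⟩
    · simp [monomial_zero', pderiv_C]
    · rw [Finset.sum_eq_single k]
      · simp [pderiv_monomial, eval_monomial]
        ring
      · intro l _ hl
        rw [pderiv_monomial]
        simp [Finsupp.single_apply, if_neg (Ne.symm hl)]
      · simp
  conv_lhs => rw [P.as_sum]
  conv_rhs => rw [P.as_sum]
  rw [map_sum]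
  have hpd : ∀ l : Fin n, eval u (pderiv l (∑ d ∈ P.support, monomial d (coeff d P)))
      = ∑ d ∈ P.support, eval u (pderiv l (monomial d (coeff d P))) := by
    intro l; rw [map_sum, map_sum]
  conv_rhs => rw [map_sum]
  calc ∑ d ∈ P.support, eval x (monomial d (coeff d P))
      = ∑ d ∈ P.support, (eval u (monomial d (coeff d P))
          + ∑ l, eval u (pderiv l (monomial d (coeff d P))) * (x l - u l)) :=
        Finset.sum_congr rfl fun d hd => key d hd _
    _ = _ := by
        rw [Finset.sum_add_distrib]
        congr 1
        rw [Finset.sum_comm]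
        refine Finset.sum_congr rfl fun l _ => ?_
        rw [hpd l, Finset.sum_mul]

lemma aux_concave_grad_ineq {n : ℕ} (P : MvPolynomial (Fin n) ℝ)
    (hc : ConcaveOn ℝ Set.univ (fun y : Fin n → ℝ => eval y P)) (u x : Fin n → ℝ) :
    eval x P ≤ eval u P + ∑ l, eval u (pderiv l P) * (x l - u l) := by
  have hneg : ConvexOn ℝ Set.univ (fun y : Fin n → ℝ => eval y (-P)) := by
    have h0 := hc.neg
    have e : (fun y : Fin n → ℝ => eval y (-P)) = -(fun y => eval y P) := by
      funext y
      simp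
    rw [e]
    exact h0
  have := aux_convex_grad_ineq (-P) hneg u x
  simp only [map_neg, neg_mul, Finset.sum_neg_distrib] at this
  linarith

theorem stmt_7
    (n m : ℕ) (hn : 1 ≤ n) (hm : 1 ≤ m)
    (Δ : Fin m → Finset (Fin n))
    (ℓ s : Fin m → ℕ)
    (f : Fin m → MvPolynomial (Fin n) ℝ)
    (h : (i : Fin m) → Fin (ℓ i) → MvPolynomial (Fin n) ℝ)
    (g : (i : Fin m) → Fin (s i) → MvPolynomial (Fin n) ℝ)
    (hf : ∀ i, f i ∈ MvPolynomial.supported ℝ (↑(Δ i) : Set (Fin n)))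
    (hh : ∀ i j, h i j ∈ MvPolynomial.supported ℝ (↑(Δ i) : Set (Fin n)))
    (hg : ∀ i j, g i j ∈ MvPolynomial.supported ℝ (↑(Δ i) : Set (Fin n)))
    (K : Set (Fin n → ℝ))
    (hKdef : K = { x | (∀ i j, MvPolynomial.eval x (h i j) = 0) ∧
        (∀ i j, 0 ≤ MvPolynomial.eval x (g i j)) })
    (KΔ : Fin m → Set (Fin n → ℝ))
    (hKΔdef : ∀ i, KΔ i = { x | (∀ j, MvPolynomial.eval x (h i j) = 0) ∧
        (∀ j, 0 ≤ MvPolynomial.eval x (g i j)) })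
    -- each `h_{i,j}` is linear:
    (hhlin : ∀ i j, (h i j).totalDegree ≤ 1)
    -- each `f_i` is convex and each `g_{i,j}` is concave on `ℝ^n`:
    (hconv : ∀ i, ConvexOn ℝ Set.univ (fun x : Fin n → ℝ => MvPolynomial.eval x (f i)))
    (hconc : ∀ i j, ConcaveOn ℝ Set.univ (fun x : Fin n → ℝ => MvPolynomial.eval x (g i j)))
    -- `u` is a global minimizer of `f` on `K`:
    (u : Fin n → ℝ) (hu : u ∈ K)
    (humin : ∀ x ∈ K, MvPolynomial.eval u (∑ i, f i) ≤ MvPolynomial.eval x (∑ i, f i))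
    -- first-order KKT conditions at `u`:
    (lam : (i : Fin m) → Fin (s i) → ℝ)
    (nu : (i : Fin m) → Fin (ℓ i) → ℝ)
    (hlamnn : ∀ i j, 0 ≤ lam i j)
    (hcomp : ∀ i j, lam i j * MvPolynomial.eval u (g i j) = 0)
    (hkkt : ∀ l : Fin n,
      (∑ i, MvPolynomial.eval u (MvPolynomial.pderiv l (f i))) =
        ∑ i, ((∑ j, lam i j * MvPolynomial.eval u (MvPolynomial.pderiv l (g i j))) +
          ∑ j, nu i j * MvPolynomial.eval u (MvPolynomial.pderiv l (h i j)))) :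
    ∃ p : Fin m → MvPolynomial (Fin n) ℝ,
      (∀ i, p i ∈ MvPolynomial.supported ℝ (↑(Δ i) : Set (Fin n))) ∧
      (∑ i, p i) + MvPolynomial.C (MvPolynomial.eval u (∑ i, f i)) = 0 ∧
      ∀ i, ∀ x ∈ KΔ i, 0 ≤ MvPolynomial.eval x (f i) + MvPolynomial.eval x (p i) := by
  classical
  rw [hKdef] at hu
  obtain ⟨huh, hug⟩ := hu
  -- the Lagrangian polynomials
  set P : Fin m → MvPolynomial (Fin n) ℝ :=
    fun i => f i - (∑ j, C (lam i j) * g i j) - ∑ j, C (nu i j) * h i j with hPdef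
  set c : Fin m → Fin n → ℝ := fun i l => eval u (pderiv l (P i)) with hcdef
  have hPmem : ∀ i, P i ∈ supported ℝ (↑(Δ i) : Set (Fin n)) := by
    intro i
    refine Subalgebra.sub_mem _ (Subalgebra.sub_mem _ (hf i) ?_) ?_
    · refine Subalgebra.sum_mem _ fun j _ => ?_
      rw [C_mul']
      exact Subalgebra.smul_mem _ (hg i j) _
    · refine Subalgebra.sum_mem _ fun j _ => ?_
      rw [C_mul']
      exact Subalgebra.smul_mem _ (hh i j) _
  have hczero : ∀ i, ∀ l ∉ Δ i, c i l = 0 := by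
    intro i l hl
    have hvars : ↑(P i).vars ⊆ (↑(Δ i) : Set (Fin n)) := mem_supported.mp (hPmem i)
    have : l ∉ (P i).vars := fun hmem => hl (by exact_mod_cast hvars hmem)
    simp [hcdef, pderiv_eq_zero_of_notMem_vars this]
  -- formula for c
  have hcil : ∀ i l, c i l = eval u (pderiv l (f i))
      - (∑ j, lam i j * eval u (pderiv l (g i j)))
      - ∑ j, nu i j * eval u (pderiv l (h i j)) := by
    intro i l
    simp [hcdef, hPdef, map_sub, map_sum, pderiv_C_mul]
  refine ⟨fun i => - (∑ l, C (c i l) * (X l - C (u l))) - C (eval u (f i)), ?_, ?_, ?_⟩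
  · intro i
    refine Subalgebra.sub_mem _ (Subalgebra.neg_mem _ ?_) ?_
    · refine Subalgebra.sum_mem _ fun l _ => ?_
      by_cases hl : l ∈ Δ i
      · rw [C_mul']
        refine Subalgebra.smul_mem _ (Subalgebra.sub_mem _ ?_ ?_) _
        · exact X_mem_supported.mpr hl
        · rw [← algebraMap_eq]; exact Subalgebra.algebraMap_mem _ _
      · rw [hczero i l hl, map_zero, zero_mul]
        exact Subalgebra.zero_mem _
    · rw [← algebraMap_eq]; exact Subalgebra.algebraMap_mem _ _
  · -- the sum identity
    have hsum : ∀ l, (∑ i, c i l) = 0 := by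
      intro l
      simp only [hcil]
      rw [Finset.sum_sub_distrib, Finset.sum_sub_distrib, hkkt l, Finset.sum_add_distrib]
      ring
    have hq : (∑ i, ∑ l, C (c i l) * (X l - C (u l))) = 0 := by
      rw [Finset.sum_comm]
      refine Finset.sum_eq_zero fun l _ => ?_
      rw [← Finset.sum_mul, ← map_sum, hsum l]
      simp
    rw [Finset.sum_sub_distrib, Finset.sum_neg_distrib, hq]
    rw [← map_sum C, ← map_sum (eval u)]
    ring
  · -- the pointwise inequality on KΔ i
    intro i x hx
    rw [hKΔdef i] at hx
    obtain ⟨hxh, hxg⟩ := hx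
    have hevalp : eval x (- (∑ l, C (c i l) * (X l - C (u l))) - C (eval u (f i)))
        = - (∑ l, c i l * (x l - u l)) - eval u (f i) := by
      simp [map_sub, map_neg, map_sum]
    rw [hevalp]
    -- rewrite the sum via hcil
    have hkey : (∑ l, c i l * (x l - u l))
        = (∑ l, eval u (pderiv l (f i)) * (x l - u l))
          - (∑ j, lam i j * ∑ l, eval u (pderiv l (g i j)) * (x l - u l))
          - ∑ j, nu i j * ∑ l, eval u (pderiv l (h i j)) * (x l - u l) := by
      simp only [hcil, sub_mul, Finset.sum_sub_distrib]
      congr 1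
      · congr 1
        calc ∑ l, (∑ j, lam i j * eval u (pderiv l (g i j))) * (x l - u l)
            = ∑ l, ∑ j, lam i j * (eval u (pderiv l (g i j)) * (x l - u l)) := by
              refine Finset.sum_congr rfl fun l _ => ?_
              rw [Finset.sum_mul]
              exact Finset.sum_congr rfl fun j _ => by ring
          _ = ∑ j, ∑ l, lam i j * (eval u (pderiv l (g i j)) * (x l - u l)) :=
              Finset.sum_comm
          _ = ∑ j, lam i j * ∑ l, eval u (pderiv l (g i j)) * (x l - u l) :=
              Finset.sum_congr rfl fun j _ => (Finset.mul_sum _ _ _).symm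
      · calc ∑ l, (∑ j, nu i j * eval u (pderiv l (h i j))) * (x l - u l)
            = ∑ l, ∑ j, nu i j * (eval u (pderiv l (h i j)) * (x l - u l)) := by
              refine Finset.sum_congr rfl fun l _ => ?_
              rw [Finset.sum_mul]
              exact Finset.sum_congr rfl fun j _ => by ring
          _ = ∑ j, ∑ l, nu i j * (eval u (pderiv l (h i j)) * (x l - u l)) :=
              Finset.sum_comm
          _ = ∑ j, nu i j * ∑ l, eval u (pderiv l (h i j)) * (x l - u l) :=
              Finset.sum_congr rfl fun j _ => (Finset.mul_sum _ _ _).symm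
    rw [hkey]
    have hA := aux_convex_grad_ineq (f i) (hconv i) u x
    have hB : 0 ≤ ∑ j, lam i j * ∑ l, eval u (pderiv l (g i j)) * (x l - u l) := by
      refine Finset.sum_nonneg fun j _ => ?_
      have hgj := aux_concave_grad_ineq (g i j) (hconc i j) u x
      have h1 : lam i j * eval x (g i j)
          ≤ lam i j * (eval u (g i j) + ∑ l, eval u (pderiv l (g i j)) * (x l - u l)) :=
        mul_le_mul_of_nonneg_left hgj (hlamnn i j)
      have h2 : 0 ≤ lam i j * eval x (g i j) :=
        mul_nonneg (hlamnn i j) (hxg j)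
      have h3 := hcomp i j
      nlinarith [h1, h2, h3]
    have hC : ∀ j, (∑ l, eval u (pderiv l (h i j)) * (x l - u l)) = 0 := by
      intro j
      have := aux_eval_affine (h i j) (hhlin i j) u x
      rw [hxh j, huh i j] at this
      linarith
    have hCsum : (∑ j, nu i j * ∑ l, eval u (pderiv l (h i j)) * (x l - u l)) = 0 :=
      Finset.sum_eq_zero fun j _ => by rw [hC j, mul_zero]
    rw [hCsum]
    linarith
end
end

section
/- Suppose each h_{i,j} has totalDegree ≤ 1, each f_i is SOS-convex, and each −g_{i,j} is SOS-convex. Let k ≥ k_0 and let y : (Fin n →₀ ℕ) → ℝ be feasible for the order-k sparse moment relaxation. Then the point v := (L_y(x_1), …, L_y(x_n)) ∈ ℝ^n belongs to K and f(v) ≤ L_y(f). Consequently, if K ≠ ∅ and f is bounded below on K with infimum f_min, then L_y(f) ≥ f_min (so f_k^{smo} = f_min for all k ≥ k_0), and if moreover L_{y'}(f) ≥ L_y(f) for every order-k feasible y' (y is a minimizer of the relaxation), then v is a global minimizer of f over K. -/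
open MvPolynomial

noncomputable section

/-- A polynomial is SOS-convex: its Hessian is `H(x)ᵀ H(x)` for a matrix polynomial `H`. -/
def SOSConvex (n : ℕ) (p : MvPolynomial (Fin n) ℝ) : Prop :=
  ∃ (r : ℕ) (H : Fin r → Fin n → MvPolynomial (Fin n) ℝ),
    ∀ j j' : Fin n,
      MvPolynomial.pderiv j (MvPolynomial.pderiv j' p) = ∑ l, H l j * H l j'

variable {n : ℕ} {y : (Fin n →₀ ℕ) → ℝ}

lemma riesz_eq_sum_of_subset {p : MvPolynomial (Fin n) ℝ} {s : Finset (Fin n →₀ ℕ)}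
    (hs : p.support ⊆ s) : Riesz n y p = ∑ α ∈ s, MvPolynomial.coeff α p * y α := by
  refine Finset.sum_subset hs (fun α _ hα => ?_)
  rw [MvPolynomial.notMem_support_iff.mp hα, zero_mul]

lemma riesz_add (p q : MvPolynomial (Fin n) ℝ) :
    Riesz n y (p + q) = Riesz n y p + Riesz n y q := by
  classical
  rw [riesz_eq_sum_of_subset (s := p.support ∪ q.support ∪ (p+q).support) (by intro a ha; simp [Finset.mem_union, ha]),
    riesz_eq_sum_of_subset (p := p) (s := p.support ∪ q.support ∪ (p+q).support) (by intro a ha; simp [Finset.mem_union, ha]),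
    riesz_eq_sum_of_subset (p := q) (s := p.support ∪ q.support ∪ (p+q).support) (by intro a ha; simp [Finset.mem_union, ha]),
    ← Finset.sum_add_distrib]
  exact Finset.sum_congr rfl fun α _ => by rw [coeff_add]; ring

lemma riesz_smul (c : ℝ) (p : MvPolynomial (Fin n) ℝ) :
    Riesz n y (c • p) = c * Riesz n y p := by
  rw [riesz_eq_sum_of_subset (p := c • p) (s := p.support) support_smul, Riesz,
    Finset.mul_sum]
  exact Finset.sum_congr rfl fun α _ => by rw [coeff_smul]; simp [mul_assoc]

lemma riesz_zero : Riesz n y 0 = 0 := by simp [Riesz]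

lemma riesz_neg (p : MvPolynomial (Fin n) ℝ) : Riesz n y (-p) = - Riesz n y p := by
  have := riesz_smul (y := y) (-1) p; simpa using this

lemma riesz_sub (p q : MvPolynomial (Fin n) ℝ) :
    Riesz n y (p - q) = Riesz n y p - Riesz n y q := by
  rw [sub_eq_add_neg, riesz_add, riesz_neg]; ring

lemma riesz_finset_sum {ι : Type*} (s : Finset ι) (f : ι → MvPolynomial (Fin n) ℝ) :
    Riesz n y (∑ i ∈ s, f i) = ∑ i ∈ s, Riesz n y (f i) := by
  classical
  induction s using Finset.induction_on with
  | empty => simp [riesz_zero]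
  | insert _ _ h ih => rw [Finset.sum_insert h, riesz_add, ih, Finset.sum_insert h]

lemma riesz_monomial (α : Fin n →₀ ℕ) (c : ℝ) :
    Riesz n y (monomial α c) = c * y α := by
  rcases eq_or_ne c 0 with rfl | hc
  · simp [riesz_zero]
  · rw [Riesz, support_monomial, if_neg hc, Finset.sum_singleton, coeff_monomial, if_pos rfl]

lemma riesz_C (c : ℝ) : Riesz n y (C c) = c * y 0 := by
  rw [← monomial_zero', riesz_monomial]

lemma riesz_X (j : Fin n) : Riesz n y (X j) = y (Finsupp.single j 1) := by
  rw [X, riesz_monomial, one_mul]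
open MvPolynomial
noncomputable section

variable {n : ℕ}

/-- substitution `x ↦ v + t(x - v)` as a polynomial in `t` with MvPolynomial coefficients -/
def tau (v : Fin n → ℝ) : MvPolynomial (Fin n) ℝ →ₐ[ℝ] Polynomial (MvPolynomial (Fin n) ℝ) :=
  aeval (fun j => Polynomial.C (C (v j)) + Polynomial.X * Polynomial.C (X j - C (v j)))

lemma tau_X (v : Fin n → ℝ) (j : Fin n) :
    tau v (X j) = Polynomial.C (C (v j)) + Polynomial.X * Polynomial.C (X j - C (v j)) := by
  simp [tau]

lemma tau_C (v : Fin n → ℝ) (a : ℝ) : tau v (C a) = Polynomial.C (C a) := by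
  simp [tau, algHom_C, algebraMap_eq, Polynomial.algebraMap_apply]

lemma eval_one_tau (v : Fin n → ℝ) (p : MvPolynomial (Fin n) ℝ) :
    (tau v p).eval 1 = p := by
  induction p using MvPolynomial.induction_on with
  | C a => rw [tau_C]; simp
  | add p q hp hq => rw [map_add, Polynomial.eval_add, hp, hq]
  | mul_X p j hp => rw [map_mul, Polynomial.eval_mul, hp, tau_X]; simp

lemma coeff_zero_tau (v : Fin n → ℝ) (p : MvPolynomial (Fin n) ℝ) :
    (tau v p).coeff 0 = C (eval v p) := by
  induction p using MvPolynomial.induction_on with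
  | C a => rw [tau_C]; simp
  | add p q hp hq => rw [map_add, Polynomial.coeff_add, hp, hq, map_add, C_add]
  | mul_X p j hp =>
      rw [map_mul, Polynomial.mul_coeff_zero, hp, tau_X]
      simp [Polynomial.coeff_add, Polynomial.mul_coeff_zero, map_mul, mul_comm]

lemma derivative_tau (v : Fin n → ℝ) (p : MvPolynomial (Fin n) ℝ) :
    Polynomial.derivative (tau v p)
      = ∑ j, Polynomial.C (X j - C (v j)) * tau v (pderiv j p) := by
  induction p using MvPolynomial.induction_on with
  | C a => simp [tau_C]
  | add p q hp hq =>
      rw [map_add, map_add, hp, hq, ← Finset.sum_add_distrib]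
      exact Finset.sum_congr rfl fun j _ => by rw [map_add, map_add, mul_add]
  | mul_X p j₀ hp =>
      rw [map_mul, Polynomial.derivative_mul, hp]
      rw [show Polynomial.derivative (tau v (X j₀)) = Polynomial.C (X j₀ - C (v j₀)) by
        rw [tau_X]; simp]
      have hpd : ∀ j : Fin n, pderiv j (p * X j₀)
          = pderiv j p * X j₀ + p * (if j₀ = j then 1 else 0) := by
        intro j
        rw [pderiv_mul, pderiv_X]
        congr 1
        by_cases hj : j₀ = j <;> simp [hj, Pi.single_apply]
      have hrhs : ∀ j : Fin n, Polynomial.C (X j - C (v j)) * tau v (pderiv j (p * X j₀))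
          = Polynomial.C (X j - C (v j)) * tau v (pderiv j p) * tau v (X j₀)
            + (if j₀ = j then Polynomial.C (X j - C (v j)) * tau v p else 0) := by
        intro j
        rw [hpd, map_add, map_mul, map_mul, mul_add]
        congr 1
        · ring
        · by_cases hj : j₀ = j <;> simp [hj]
      rw [Finset.sum_congr rfl fun j _ => hrhs j, Finset.sum_add_distrib,
        Finset.sum_ite_eq Finset.univ j₀ (fun j => Polynomial.C (X j - C (v j)) * tau v p),
        if_pos (Finset.mem_univ _), Finset.sum_mul]
      ring

lemma derivative2_tau (v : Fin n → ℝ) (p : MvPolynomial (Fin n) ℝ) {r : ℕ}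
    (H : Fin r → Fin n → MvPolynomial (Fin n) ℝ)
    (hH : ∀ j j' : Fin n, pderiv j (pderiv j' p) = ∑ l, H l j * H l j') :
    Polynomial.derivative (Polynomial.derivative (tau v p))
      = ∑ l, (∑ j, Polynomial.C (X j - C (v j)) * tau v (H l j)) ^ 2 := by
  rw [derivative_tau, map_sum]
  rw [Finset.sum_congr rfl (fun j _ => by
    rw [Polynomial.derivative_C_mul, derivative_tau] :
    ∀ j ∈ Finset.univ, Polynomial.derivative (Polynomial.C (X j - C (v j)) * tau v (pderiv j p))
      = Polynomial.C (X j - C (v j))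
        * ∑ j', Polynomial.C (X j' - C (v j')) * tau v (pderiv j' (pderiv j p)))]
  have hstep : ∀ j : Fin n,
      Polynomial.C (X j - C (v j))
        * ∑ j', Polynomial.C (X j' - C (v j')) * tau v (pderiv j' (pderiv j p))
      = ∑ l, ∑ j', (Polynomial.C (X j - C (v j)) * tau v (H l j))
          * (Polynomial.C (X j' - C (v j')) * tau v (H l j')) := by
    intro j
    rw [Finset.mul_sum]
    rw [Finset.sum_congr rfl (fun j' _ => by
      rw [hH j' j, map_sum, Finset.mul_sum, Finset.mul_sum]; exact Finset.sum_congr rfl fun l _ => by rw [map_mul] :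
      ∀ j' ∈ Finset.univ, Polynomial.C (X j - C (v j))
          * (Polynomial.C (X j' - C (v j')) * tau v (pderiv j' (pderiv j p)))
        = ∑ l, Polynomial.C (X j - C (v j))
            * (Polynomial.C (X j' - C (v j')) * (tau v (H l j') * tau v (H l j))))]
    rw [Finset.sum_comm]
    exact Finset.sum_congr rfl fun l _ => Finset.sum_congr rfl fun j' _ => by ring
  rw [Finset.sum_congr rfl fun j _ => hstep j, Finset.sum_comm]
  refine Finset.sum_congr rfl fun l _ => ?_
  rw [sq, Finset.sum_mul_sum]
noncomputable section
open Matrix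

/-- moment of `(1-t)dt` on `[0,1]` -/
def gam (c : ℕ) : ℝ := (((c : ℝ) + 1) * ((c : ℝ) + 2))⁻¹

lemma gam_eq (c : ℕ) : gam c = ((c : ℝ) + 1)⁻¹ - ((c : ℝ) + 2)⁻¹ := by
  have h1 : ((c : ℝ) + 1) ≠ 0 := by positivity
  have h2 : ((c : ℝ) + 2) ≠ 0 := by positivity
  rw [gam]; field_simp; ring

lemma integral_gam (c : ℕ) : ∫ t in (0:ℝ)..1, ((1 - t) * t ^ c) = gam c := by
  have h : ∀ t : ℝ, (1 - t) * t ^ c = t ^ c - t ^ (c + 1) := by intro t; ring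
  simp_rw [h]
  rw [intervalIntegral.integral_sub ((continuous_pow c).intervalIntegrable 0 1)
    ((continuous_pow (c+1)).intervalIntegrable 0 1), integral_pow, integral_pow, gam_eq]
  push_cast
  norm_num
  ring

lemma gram_psd (N : ℕ) :
    Matrix.PosSemidef (Matrix.of (fun a b : Fin N => gam ((a : ℕ) + (b : ℕ)))) := by
  have key : ∀ x : Fin N → ℝ,
      dotProduct x ((Matrix.of (fun a b : Fin N => gam ((a : ℕ) + (b : ℕ)))) *ᵥ x)
      = ∫ t in (0:ℝ)..1, ((1 - t) * (∑ a : Fin N, x a * t ^ (a : ℕ)) ^ 2) := by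
    intro x
    have expand : ∀ t : ℝ, (1 - t) * (∑ a : Fin N, x a * t ^ (a : ℕ)) ^ 2
        = ∑ a : Fin N, ∑ b : Fin N, (x a * x b) * ((1 - t) * t ^ ((a : ℕ) + (b : ℕ))) := by
      intro t
      rw [sq, Finset.sum_mul_sum, Finset.mul_sum]
      refine Finset.sum_congr rfl fun a _ => ?_
      rw [Finset.mul_sum]
      refine Finset.sum_congr rfl fun b _ => ?_
      rw [pow_add]; ring
    simp_rw [expand]
    rw [intervalIntegral.integral_finset_sum
      (fun a _ => (Continuous.intervalIntegrable (by continuity) 0 1))]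
    rw [Finset.sum_congr rfl (fun a _ => intervalIntegral.integral_finset_sum
      (fun b _ => (Continuous.intervalIntegrable (by continuity) 0 1)))]
    rw [dotProduct, Finset.sum_congr rfl (fun a _ => ?_)]
    rw [mulVec, dotProduct, Finset.mul_sum, Finset.sum_congr rfl (fun b _ => ?_)]
    rw [intervalIntegral.integral_const_mul, integral_gam, Matrix.of_apply]
    ring
  refine Matrix.PosSemidef.of_dotProduct_mulVec_nonneg ?_ ?_
  · ext a b
    simp [Matrix.conjTranspose_apply, Matrix.of_apply, add_comm]
  · intro x
    rw [star_trivial, key]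
    refine intervalIntegral.integral_nonneg (by norm_num) (fun u hu => ?_)
    have : (0:ℝ) ≤ 1 - u := by simp at hu; linarith [hu.2]
    positivity
set_option maxHeartbeats 1000000 in
open MvPolynomial Polynomial in
lemma gap_sos {n : ℕ} (v : Fin n → ℝ) (p : MvPolynomial (Fin n) ℝ) {r : ℕ}
    (H : Fin r → Fin n → MvPolynomial (Fin n) ℝ)
    (hH : ∀ j j' : Fin n, pderiv j (pderiv j' p) = ∑ l, H l j * H l j') :
    ∃ (N : ℕ) (q : Fin N → MvPolynomial (Fin n) ℝ),
      p - MvPolynomial.C (eval v p)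
        - ∑ j, MvPolynomial.C (eval v (pderiv j p)) * (X j - MvPolynomial.C (v j))
      = ∑ t, (q t) ^ 2 := by
  classical
  set Q : Polynomial (MvPolynomial (Fin n) ℝ) := tau v p with hQdef
  set U : Fin r → Polynomial (MvPolynomial (Fin n) ℝ) :=
    fun l => ∑ j, Polynomial.C (X j - MvPolynomial.C (v j)) * tau v (H l j) with hUdef
  have hQ2 : Polynomial.derivative (Polynomial.derivative Q) = ∑ l, (U l) ^ 2 :=
    derivative2_tau v p H hH
  -- coefficient extraction
  have hcoeff : ∀ c : ℕ, Q.coeff (c + 2) = gam c • ∑ l, ((U l) ^ 2).coeff c := by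
    intro c
    have h2 : (Polynomial.derivative (Polynomial.derivative Q)).coeff c
        = Q.coeff (c + 2) * ((↑(c + 1) + 1 : MvPolynomial (Fin n) ℝ)
            * ((c : MvPolynomial (Fin n) ℝ) + 1)) := by
      rw [Polynomial.coeff_derivative, Polynomial.coeff_derivative, mul_assoc]
    have hsum : ∑ l, ((U l) ^ 2).coeff c
        = Q.coeff (c + 2) * ((↑(c + 1) + 1 : MvPolynomial (Fin n) ℝ)
            * ((c : MvPolynomial (Fin n) ℝ) + 1)) := by
      rw [← h2, hQ2, Polynomial.finset_sum_coeff]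
    rw [hsum, MvPolynomial.smul_eq_C_mul]
    have e1 : ((c : MvPolynomial (Fin n) ℝ) + 1) = MvPolynomial.C ((c : ℝ) + 1) := by
      rw [map_add, map_natCast, _root_.map_one]
    have e2 : ((↑(c+1) : MvPolynomial (Fin n) ℝ) + 1) = MvPolynomial.C ((c : ℝ) + 2) := by
      rw [map_add, map_natCast, map_ofNat]
      push_cast
      ring
    have hone : gam c * (((c:ℝ) + 2) * ((c:ℝ) + 1)) = 1 := by
      have h1' : ((c : ℝ) + 1) ≠ 0 := by positivity
      have h2' : ((c : ℝ) + 2) ≠ 0 := by positivity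
      rw [gam]; field_simp
    rw [e1, e2]
    have hC1 : MvPolynomial.C (gam c) * (MvPolynomial.C ((c:ℝ)+2) * MvPolynomial.C ((c:ℝ)+1))
        = (1 : MvPolynomial (Fin n) ℝ) := by
      rw [← _root_.map_mul, ← _root_.map_mul, hone, _root_.map_one]
    calc Q.coeff (c+2)
        = (MvPolynomial.C (gam c)
            * (MvPolynomial.C ((c:ℝ)+2) * MvPolynomial.C ((c:ℝ)+1))) * Q.coeff (c+2) := by
          rw [hC1, one_mul]
      _ = MvPolynomial.C (gam c)
            * (Q.coeff (c+2) * (MvPolynomial.C ((c:ℝ)+2) * MvPolynomial.C ((c:ℝ)+1))) := by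
          ring
  -- Taylor formula
  have taylor : ∀ M : ℕ, Q.natDegree < M + 2 →
      p - MvPolynomial.C (eval v p)
          - ∑ j, MvPolynomial.C (eval v (pderiv j p)) * (X j - MvPolynomial.C (v j))
        = ∑ c ∈ Finset.range M, Q.coeff (c + 2) := by
    intro M hM
    have h0 : Q.coeff 0 = MvPolynomial.C (eval v p) := coeff_zero_tau v p
    have hd0 : (Polynomial.derivative Q).coeff 0 = Q.coeff 1 := by
      rw [Polynomial.coeff_derivative]
      norm_num
    have h1 : Q.coeff 1
        = ∑ j, MvPolynomial.C (eval v (pderiv j p)) * (X j - MvPolynomial.C (v j)) := by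
      rw [← hd0, hQdef, derivative_tau, Polynomial.finset_sum_coeff]
      refine Finset.sum_congr rfl fun j _ => ?_
      rw [Polynomial.coeff_C_mul, coeff_zero_tau]
      ring
    have heval : p = ∑ c ∈ Finset.range (M + 2), Q.coeff c := by
      conv_lhs => rw [← eval_one_tau v p]
      rw [Polynomial.eval_eq_sum_range' (show Q.natDegree < M + 2 from hM) 1]
      exact Finset.sum_congr rfl fun c _ => by rw [one_pow, mul_one]
    calc p - MvPolynomial.C (eval v p)
          - ∑ j, MvPolynomial.C (eval v (pderiv j p)) * (X j - MvPolynomial.C (v j))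
        = (∑ c ∈ Finset.range (M + 2), Q.coeff c) - Q.coeff 0 - Q.coeff 1 := by
          rw [← h0, ← h1, ← heval]
      _ = ∑ c ∈ Finset.range M, Q.coeff (c + 2) := by
          rw [Finset.sum_range_succ' _ (M + 1),
            Finset.sum_range_succ' (fun i => Q.coeff (i + 1)) M]
          ring
  -- sizes
  set D : ℕ := Finset.univ.sup (fun l : Fin r => (U l).natDegree) with hD
  set NU : ℕ := D + 1 with hNU
  set M : ℕ := max Q.natDegree (2 * NU) with hM
  have hM1 : Q.natDegree < M + 2 := by
    have := le_max_left Q.natDegree (2 * NU); omega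
  have hgap := taylor M hM1
  have hucoeff : ∀ (l : Fin r) (a : ℕ), NU ≤ a → (U l).coeff a = 0 := by
    intro l a ha
    refine Polynomial.coeff_eq_zero_of_natDegree_lt ?_
    have : (U l).natDegree ≤ D :=
      Finset.le_sup (f := fun l : Fin r => (U l).natDegree) (Finset.mem_univ l)
    omega
  -- to pairs
  have hgap2 : p - MvPolynomial.C (eval v p)
      - ∑ j, MvPolynomial.C (eval v (pderiv j p)) * (X j - MvPolynomial.C (v j))
      = ∑ l, ∑ c ∈ Finset.range M, ∑ x ∈ Finset.HasAntidiagonal.antidiagonal c,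
          gam (x.1 + x.2) • ((U l).coeff x.1 * (U l).coeff x.2) := by
    rw [hgap, Finset.sum_comm]
    refine Finset.sum_congr rfl fun c _ => ?_
    rw [hcoeff c, Finset.smul_sum]
    refine Finset.sum_congr rfl fun l _ => ?_
    rw [sq, Polynomial.coeff_mul, Finset.smul_sum]
    refine Finset.sum_congr rfl fun x hx => ?_
    rw [Finset.HasAntidiagonal.mem_antidiagonal.mp hx]
  have key : ∀ l : Fin r,
      ∑ c ∈ Finset.range M, ∑ x ∈ Finset.HasAntidiagonal.antidiagonal c,
          gam (x.1 + x.2) • ((U l).coeff x.1 * (U l).coeff x.2)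
      = ∑ a ∈ Finset.range NU, ∑ b ∈ Finset.range NU,
          gam (a + b) • ((U l).coeff a * (U l).coeff b) := by
    intro l
    have hdisj : (↑(Finset.range M) : Set ℕ).PairwiseDisjoint Finset.HasAntidiagonal.antidiagonal := by
      intro c _ c' _ hcc
      simp only [Finset.disjoint_left]
      intro x hx hx'
      exact hcc ((Finset.HasAntidiagonal.mem_antidiagonal.mp hx).symm.trans (Finset.HasAntidiagonal.mem_antidiagonal.mp hx'))
    rw [← Finset.sum_biUnion hdisj]
    have hsub : Finset.range NU ×ˢ Finset.range NU
        ⊆ (Finset.range M).biUnion Finset.HasAntidiagonal.antidiagonal := by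
      intro x hx
      rw [Finset.mem_product, Finset.mem_range, Finset.mem_range] at hx
      rw [Finset.mem_biUnion]
      refine ⟨x.1 + x.2, Finset.mem_range.mpr ?_, Finset.HasAntidiagonal.mem_antidiagonal.mpr rfl⟩
      have := le_max_right Q.natDegree (2 * NU)
      omega
    have hzeros : ∀ x ∈ (Finset.range M).biUnion Finset.HasAntidiagonal.antidiagonal,
        x ∉ Finset.range NU ×ˢ Finset.range NU →
        gam (x.1 + x.2) • ((U l).coeff x.1 * (U l).coeff x.2) = 0 := by
      intro x _ hx
      rw [Finset.mem_product, not_and_or] at hx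
      rcases hx with hx | hx
      · rw [Finset.mem_range, not_lt] at hx
        rw [hucoeff l _ hx, zero_mul, smul_zero]
      · rw [Finset.mem_range, not_lt] at hx
        rw [hucoeff l _ hx, mul_zero, smul_zero]
    rw [← Finset.sum_subset hsub hzeros, Finset.sum_product]
  -- Gram decomposition
  obtain ⟨B, hB⟩ : ∃ B : Matrix (Fin NU) (Fin NU) ℝ,
      (Matrix.of fun a b : Fin NU => gam ((a:ℕ) + (b:ℕ))) = Bᴴ * B := by
    open scoped MatrixOrder in
    exact CStarAlgebra.nonneg_iff_eq_star_mul_self.mp (gram_psd NU).nonneg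
  have hGentry : ∀ a b : Fin NU, gam ((a:ℕ) + (b:ℕ)) = ∑ e, B e a * B e b := by
    intro a b
    have h : (Matrix.of fun a b : Fin NU => gam ((a:ℕ) + (b:ℕ))) a b = (Bᴴ * B) a b := by
      rw [hB]
    rw [Matrix.of_apply] at h
    rw [h, Matrix.mul_apply]
    exact Finset.sum_congr rfl fun e _ => by rw [Matrix.conjTranspose_apply, star_trivial]
  set w : Fin r × Fin NU → MvPolynomial (Fin n) ℝ :=
    fun x => ∑ a : Fin NU, B x.2 a • (U x.1).coeff (a:ℕ) with hw
  have key2 : ∀ l : Fin r,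
      (∑ a ∈ Finset.range NU, ∑ b ∈ Finset.range NU,
        gam (a + b) • ((U l).coeff a * (U l).coeff b))
      = ∑ e : Fin NU, (w (l, e)) ^ 2 := by
    intro l
    have step1 : ∀ a b : Fin NU, gam ((a:ℕ)+(b:ℕ)) • ((U l).coeff (a:ℕ) * (U l).coeff (b:ℕ))
        = ∑ e : Fin NU, (B e a • (U l).coeff (a:ℕ)) * (B e b • (U l).coeff (b:ℕ)) := by
      intro a b
      rw [hGentry, Finset.sum_smul]
      exact Finset.sum_congr rfl fun e _ => (smul_mul_smul_comm _ _ _ _).symm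
    calc ∑ a ∈ Finset.range NU, ∑ b ∈ Finset.range NU,
          gam (a + b) • ((U l).coeff a * (U l).coeff b)
        = ∑ a : Fin NU, ∑ b : Fin NU,
            gam ((a:ℕ)+(b:ℕ)) • ((U l).coeff (a:ℕ) * (U l).coeff (b:ℕ)) := by
          rw [← Fin.sum_univ_eq_sum_range
            (fun a => ∑ b ∈ Finset.range NU, gam (a + b) • ((U l).coeff a * (U l).coeff b)) NU]
          exact Finset.sum_congr rfl fun a _ =>
            (Fin.sum_univ_eq_sum_range
              (fun b => gam ((a:ℕ) + b) • ((U l).coeff (a:ℕ) * (U l).coeff b)) NU).symm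
      _ = ∑ a : Fin NU, ∑ b : Fin NU, ∑ e : Fin NU,
            (B e a • (U l).coeff (a:ℕ)) * (B e b • (U l).coeff (b:ℕ)) :=
          Finset.sum_congr rfl fun a _ => Finset.sum_congr rfl fun b _ => step1 a b
      _ = ∑ e : Fin NU, ∑ a : Fin NU, ∑ b : Fin NU,
            (B e a • (U l).coeff (a:ℕ)) * (B e b • (U l).coeff (b:ℕ)) := by
          have h1 : ∀ a : Fin NU, (∑ b : Fin NU, ∑ e : Fin NU,
              (B e a • (U l).coeff (a:ℕ)) * (B e b • (U l).coeff (b:ℕ)))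
              = ∑ e : Fin NU, ∑ b : Fin NU,
              (B e a • (U l).coeff (a:ℕ)) * (B e b • (U l).coeff (b:ℕ)) :=
            fun a => Finset.sum_comm
          rw [Finset.sum_congr rfl fun a (_ : a ∈ Finset.univ) => h1 a]
          exact Finset.sum_comm
      _ = ∑ e : Fin NU, (w (l, e)) ^ 2 := by
          refine Finset.sum_congr rfl fun e _ => ?_
          rw [hw, sq, Finset.sum_mul_sum]
  refine ⟨r * NU, fun t => w (finProdFinEquiv.symm t), ?_⟩
  have last : ∑ t : Fin (r * NU), (w (finProdFinEquiv.symm t)) ^ 2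
      = ∑ l : Fin r, ∑ e : Fin NU, (w (l, e)) ^ 2 :=
    (Equiv.sum_comp finProdFinEquiv.symm (fun x : Fin r × Fin NU => (w x) ^ 2)).trans
      (Fintype.sum_prod_type _)
  rw [hgap2, Finset.sum_congr rfl fun l (_ : l ∈ Finset.univ) => (key l).trans (key2 l), ← last]

variable {n : ℕ}

lemma eval_sum_sq_nonneg {N : ℕ} (q : Fin N → MvPolynomial (Fin n) ℝ) (x : Fin n → ℝ) :
    0 ≤ eval x (∑ t, (q t) ^ 2) := by
  rw [map_sum]
  exact Finset.sum_nonneg fun t _ => by rw [map_pow]; positivity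

lemma hc_totalDegree_ne_zero {p : MvPolynomial (Fin n) ℝ} (hp : p ≠ 0) :
    homogeneousComponent p.totalDegree p ≠ 0 := by
  obtain ⟨d, hd, hsum⟩ := Finset.exists_mem_eq_sup p.support
    (support_nonempty.mpr hp) (fun s => s.sum fun _ e => e)
  intro h0
  have hcd : coeff d (homogeneousComponent p.totalDegree p) = coeff d p := by
    rw [coeff_homogeneousComponent, if_pos]
    rw [show d.degree = d.sum fun _ e => e from rfl, ← hsum]
    rfl
  rw [h0, coeff_zero] at hcd
  exact mem_support_iff.mp hd hcd.symm

lemma totalDegree_lt_of_sub_hc {p : MvPolynomial (Fin n) ℝ} {D : ℕ} (hD : 0 < D)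
    (hdeg : p.totalDegree ≤ D) :
    (p - homogeneousComponent D p).totalDegree < D := by
  rw [totalDegree]
  refine Finset.sup_lt_iff (by simpa using hD) |>.mpr fun d hd => ?_
  rw [mem_support_iff, coeff_sub, coeff_homogeneousComponent] at hd
  by_cases hdd : d.degree = D
  · rw [if_pos hdd, sub_self] at hd; exact absurd rfl hd
  · rw [if_neg hdd, sub_zero] at hd
    have h1 : (d.sum fun _ e => e) ≤ p.totalDegree := le_totalDegree (mem_support_iff.mpr hd)
    have h2 : d.degree = d.sum fun _ e => e := rfl
    omega

lemma hc_mul_top {p q : MvPolynomial (Fin n) ℝ} {D : ℕ} (hD : 0 < D)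
    (hp : p.totalDegree ≤ D) (hq : q.totalDegree ≤ D) :
    homogeneousComponent (2 * D) (p * q)
      = homogeneousComponent D p * homogeneousComponent D q := by
  set pD := homogeneousComponent D p with hpD
  set qD := homogeneousComponent D q with hqD
  have hsplit : p * q = pD * qD + ((p - pD) * q + pD * (q - qD)) := by ring
  have hhom : (pD * qD).IsHomogeneous (2 * D) := by
    have := (homogeneousComponent_isHomogeneous D p).mul (homogeneousComponent_isHomogeneous D q)
    rwa [two_mul]
  have hlow : ((p - pD) * q + pD * (q - qD)).totalDegree < 2 * D := by
    refine lt_of_le_of_lt (totalDegree_add _ _) (max_lt ?_ ?_)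
    · refine lt_of_le_of_lt (totalDegree_mul _ _) ?_
      have h1 := totalDegree_lt_of_sub_hc hD hp
      rw [← hpD] at h1
      omega
    · refine lt_of_le_of_lt (totalDegree_mul _ _) ?_
      have h1 := totalDegree_lt_of_sub_hc hD hq
      rw [← hqD] at h1
      have h2 : pD.totalDegree ≤ D := by
        rw [hpD]
        exact (homogeneousComponent_isHomogeneous D p).totalDegree_le
      omega
  rw [hsplit, map_add, homogeneousComponent_of_mem ((mem_homogeneousSubmodule _ _).mpr hhom),
    if_pos rfl, homogeneousComponent_eq_zero _ _ hlow, add_zero]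

/-- In any SOS representation of a polynomial of total degree at most `2k+1`,
every piece has degree at most `k`. -/
lemma sos_pieces_deg_le {k N : ℕ} (q : Fin N → MvPolynomial (Fin n) ℝ)
    (hdeg : (∑ t, (q t) ^ 2).totalDegree ≤ 2 * k + 1) :
    ∀ t, (q t).totalDegree ≤ k := by
  classical
  set D := Finset.univ.sup (fun t : Fin N => (q t).totalDegree) with hDdef
  suffices hDk : D ≤ k by
    intro t
    exact le_trans (Finset.le_sup (f := fun t : Fin N => (q t).totalDegree) (Finset.mem_univ t))
      hDk
  by_contra hDk
  push_neg at hDk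
  have hD : 0 < D := lt_of_le_of_lt (Nat.zero_le k) hDk
  have hcomp : homogeneousComponent (2 * D) (∑ t, (q t) ^ 2)
      = ∑ t, (homogeneousComponent D (q t)) ^ 2 := by
    rw [map_sum]
    refine Finset.sum_congr rfl fun t _ => ?_
    have hqt : (q t).totalDegree ≤ D :=
      Finset.le_sup (f := fun t : Fin N => (q t).totalDegree) (Finset.mem_univ t)
    rw [sq, sq, hc_mul_top hD hqt hqt]
  have hzero : homogeneousComponent (2 * D) (∑ t, (q t) ^ 2) = 0 :=
    homogeneousComponent_eq_zero _ _ (by omega)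
  -- pick a piece attaining the top degree
  have hne : (Finset.univ : Finset (Fin N)).Nonempty := by
    rcases (Finset.univ : Finset (Fin N)).eq_empty_or_nonempty with h | h
    · rw [hDdef, h, Finset.sup_empty] at hD; simp at hD
    · exact h
  obtain ⟨t0, -, ht0⟩ := Finset.exists_mem_eq_sup (Finset.univ : Finset (Fin N)) hne
    (fun t : Fin N => (q t).totalDegree)
  have hq0 : q t0 ≠ 0 := by
    intro h
    rw [h, totalDegree_zero] at ht0
    rw [hDdef, ← ht0] at hD
    omega
  have htop : homogeneousComponent D (q t0) ≠ 0 := by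
    rw [hDdef, ht0]
    exact hc_totalDegree_ne_zero hq0
  -- evaluate: sum of squares identically zero
  apply htop
  have heval : ∀ x : Fin n → ℝ, eval x (homogeneousComponent D (q t0)) = 0 := by
    intro x
    have h1 : ∑ t, (eval x (homogeneousComponent D (q t))) ^ 2 = 0 := by
      have := congrArg (eval x) (hcomp.symm.trans hzero)
      rw [map_sum, map_zero] at this
      rw [← this]
      exact Finset.sum_congr rfl fun t _ => by rw [map_pow]
    have h2 := (Finset.sum_eq_zero_iff_of_nonneg
      (fun t _ => sq_nonneg (eval x (homogeneousComponent D (q t))))).mp h1 t0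
      (Finset.mem_univ t0)
    exact pow_eq_zero_iff (n := 2) (by norm_num) |>.mp (h2)
  exact MvPolynomial.funext fun x => by rw [heval x, map_zero]

variable {n : ℕ}

lemma subst_mem_supported (Δ : Set (Fin n)) [DecidablePred (· ∈ Δ)] (v : Fin n → ℝ)
    (p : MvPolynomial (Fin n) ℝ) :
    aeval (fun j => if j ∈ Δ then X j else C (v j)) p ∈ supported ℝ Δ := by
  induction p using MvPolynomial.induction_on with
  | C a => rw [aeval_C]; exact Subalgebra.algebraMap_mem _ _
  | add p q hp hq => rw [map_add]; exact Subalgebra.add_mem _ hp hq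
  | mul_X p j hp =>
      rw [_root_.map_mul]
      refine Subalgebra.mul_mem _ hp ?_
      rw [aeval_X]
      split
      · exact X_mem_supported.mpr ‹_›
      · rw [← algebraMap_eq]; exact Subalgebra.algebraMap_mem _ _

lemma subst_eq_self_of_supported (Δ : Set (Fin n)) [DecidablePred (· ∈ Δ)] (v : Fin n → ℝ)
    {p : MvPolynomial (Fin n) ℝ} (hp : p ∈ supported ℝ Δ) :
    aeval (fun j => if j ∈ Δ then X j else C (v j)) p = p := by
  refine Algebra.adjoin_induction (fun x hx => ?_) (fun r => ?_)
    (fun x y _ _ hx hy => ?_) (fun x y _ _ hx hy => ?_) hp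
  · obtain ⟨j, hj, rfl⟩ := hx
    rw [aeval_X, if_pos hj]
  · rw [← algebraMap_eq, AlgHom.commutes]
  · rw [map_add, hx, hy]
  · rw [_root_.map_mul, hx, hy]

lemma pderiv_eq_zero_of_supported (Δ : Set (Fin n)) {p : MvPolynomial (Fin n) ℝ}
    (hp : p ∈ supported ℝ Δ) {j : Fin n} (hj : j ∉ Δ) : pderiv j p = 0 := by
  refine pderiv_eq_zero_of_notMem_vars fun hmem => hj ?_
  exact (mem_supported.mp hp) hmem


lemma MvPolynomial.IsHomogeneous.eval_line {n : ℕ} {e : ℕ} {h : MvPolynomial (Fin n) ℝ}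
    (hh : h.IsHomogeneous e) (t : ℝ) (x : Fin n → ℝ) :
    eval (fun j => t * x j) h = t ^ e * eval x h := by
  rw [eval_eq, eval_eq, Finset.mul_sum]
  refine Finset.sum_congr rfl fun d hd => ?_
  have hdeg : (Finsupp.weight 1) d = e := hh (mem_support_iff.mp hd)
  have hsum : ∑ i ∈ d.support, d i = e := by
    rw [← hdeg, Finsupp.weight_apply, Finsupp.sum]
    simp
  rw [show ∏ i ∈ d.support, (t * x i) ^ d i
      = t ^ (∑ i ∈ d.support, d i) * ∏ i ∈ d.support, x i ^ d i by
    rw [← Finset.prod_pow_eq_pow_sum, ← Finset.prod_mul_distrib]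
    exact Finset.prod_congr rfl fun i _ => mul_pow _ _ _, hsum]
  ring

lemma eval_line_expand {n : ℕ} (p : MvPolynomial (Fin n) ℝ) (E : ℕ) (hE : p.totalDegree ≤ E)
    (t : ℝ) (x : Fin n → ℝ) :
    eval (fun j => t * x j) p
      = ∑ e ∈ Finset.range (E + 1), t ^ e * eval x (homogeneousComponent e p) := by
  conv_lhs => rw [← sum_homogeneousComponent p]
  rw [map_sum]
  rw [Finset.sum_congr rfl fun e (_ : e ∈ Finset.range (p.totalDegree + 1)) =>
    (homogeneousComponent_isHomogeneous e p).eval_line t x]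
  refine Finset.sum_subset (Finset.range_subset_range.mpr (by omega)) fun e _ he => ?_
  rw [homogeneousComponent_eq_zero e p (by rw [Finset.mem_range, not_lt] at he; omega),
    map_zero, mul_zero]

lemma hc_nonneg_of_nonneg {n : ℕ} {G : MvPolynomial (Fin n) ℝ} {D : ℕ} (hD2 : 2 ≤ D)
    (hnn : ∀ x, 0 ≤ eval x G) (hdeg : G.totalDegree ≤ D) (x : Fin n → ℝ) :
    0 ≤ eval x (homogeneousComponent D G) := by
  by_contra hneg
  push_neg at hneg
  set P : Polynomial ℝ := ∑ e ∈ Finset.range (D + 1),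
    Polynomial.C (eval x (homogeneousComponent e G)) * Polynomial.X ^ e with hP
  have hPeval : ∀ t : ℝ, P.eval t = eval (fun j => t * x j) G := by
    intro t
    rw [eval_line_expand G D hdeg t x, hP, Polynomial.eval_finset_sum]
    exact Finset.sum_congr rfl fun e _ => by
      rw [Polynomial.eval_mul, Polynomial.eval_C, Polynomial.eval_pow, Polynomial.eval_X,
        mul_comm]
  have hcoefD : P.coeff D = eval x (homogeneousComponent D G) := by
    rw [hP, Polynomial.finset_sum_coeff]
    have hterm : ∀ e ∈ Finset.range (D + 1),
        (Polynomial.C (eval x (homogeneousComponent e G)) * Polynomial.X ^ e).coeff D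
        = if D = e then eval x (homogeneousComponent e G) else 0 := by
      intro e _
      rw [Polynomial.coeff_C_mul, Polynomial.coeff_X_pow]
      by_cases h : D = e <;> simp [h]
    rw [Finset.sum_congr rfl hterm, Finset.sum_ite_eq (Finset.range (D + 1)) D
      (fun e => eval x (homogeneousComponent e G)), if_pos (Finset.self_mem_range_succ D)]
  have hne0 : P ≠ 0 := by
    intro h
    rw [h, Polynomial.coeff_zero] at hcoefD
    exact hneg.ne hcoefD.symm
  have hPD : P.natDegree ≤ D := by
    refine Polynomial.natDegree_sum_le_of_forall_le _ _ fun e he => ?_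
    exact (Polynomial.natDegree_C_mul_X_pow_le _ _).trans
      (by rw [Finset.mem_range] at he; omega)
  have hnd : P.natDegree = D :=
    le_antisymm hPD (Polynomial.le_natDegree_of_ne_zero (by rw [hcoefD]; exact hneg.ne))
  have hlead : P.leadingCoeff < 0 := by
    rw [Polynomial.leadingCoeff, hnd, hcoefD]; exact hneg
  have hdegpos : 0 < P.degree := by
    rw [Polynomial.degree_eq_natDegree hne0, hnd]
    exact_mod_cast (by omega : 0 < D)
  have htend := Polynomial.tendsto_atBot_of_leadingCoeff_nonpos P hdegpos hlead.le
  obtain ⟨t, ht⟩ := (htend.eventually (Filter.eventually_lt_atBot 0)).exists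
  rw [Polynomial.eval] at ht
  have := hnn (fun j => t * x j)
  rw [← hPeval t] at this
  rw [Polynomial.eval] at this
  exact absurd this (not_le.mpr ht)

lemma gapexpr_deg_le {n : ℕ} (p : MvPolynomial (Fin n) ℝ) (v : Fin n → ℝ) :
    (p - C (eval v p) - ∑ j, C (eval v (pderiv j p)) * (X j - C (v j))).totalDegree
      ≤ max p.totalDegree 1 := by
  refine (totalDegree_sub _ _).trans (max_le ((totalDegree_sub _ _).trans (max_le ?_ ?_)) ?_)
  · exact le_max_left _ _
  · rw [totalDegree_C]; omega
  · refine (totalDegree_finset_sum _ _).trans (Finset.sup_le fun j _ => ?_)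
    refine (totalDegree_mul _ _).trans ?_
    rw [totalDegree_C, zero_add]
    refine le_trans ((totalDegree_sub _ _).trans (max_le ?_ ?_)) (le_max_right _ _)
    · rw [totalDegree_X]
    · rw [totalDegree_C]; omega

lemma hc_gapexpr_eq {n : ℕ} (p : MvPolynomial (Fin n) ℝ) (v : Fin n → ℝ) {D : ℕ} (hD : 2 ≤ D) :
    homogeneousComponent D
      (p - C (eval v p) - ∑ j, C (eval v (pderiv j p)) * (X j - C (v j)))
      = homogeneousComponent D p := by
  rw [map_sub, map_sub]
  rw [homogeneousComponent_eq_zero D (C (eval v p)) (by rw [totalDegree_C]; omega)]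
  rw [homogeneousComponent_eq_zero D _ (lt_of_le_of_lt (le_trans (totalDegree_finset_sum _ _)
    (Finset.sup_le fun j _ => ?_)) (show 1 < D by omega))]
  · rw [sub_zero, sub_zero]
  · refine (totalDegree_mul _ _).trans ?_
    rw [totalDegree_C, zero_add]
    refine (totalDegree_sub _ _).trans (max_le (by rw [totalDegree_X]) (by rw [totalDegree_C]; omega))

lemma sosconvex_gap_sos {n : ℕ} {p : MvPolynomial (Fin n) ℝ} (hp : SOSConvex n p)
    (v : Fin n → ℝ) :
    ∃ (N : ℕ) (q : Fin N → MvPolynomial (Fin n) ℝ),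
      p - C (eval v p) - ∑ j, C (eval v (pderiv j p)) * (X j - C (v j)) = ∑ t, (q t) ^ 2 := by
  obtain ⟨r, H, hH⟩ := hp
  exact gap_sos v p H hH

/-- the key degree bound: summands of an SOS-convex decomposition cannot have large degree -/
lemma deg_le_of_sosconvex_sum {n m : ℕ} (f : Fin m → MvPolynomial (Fin n) ℝ)
    (hfsc : ∀ i, SOSConvex n (f i)) {B : ℕ} (hB : (∑ i, f i).totalDegree ≤ B) :
    ∀ i, (f i).totalDegree ≤ max B 1 := by
  classical
  set D := Finset.univ.sup (fun i : Fin m => (f i).totalDegree) with hDdef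
  suffices hDk : D ≤ max B 1 by
    intro i
    exact le_trans (Finset.le_sup (f := fun i : Fin m => (f i).totalDegree) (Finset.mem_univ i))
      hDk
  by_contra hgt
  push_neg at hgt
  have hD2 : 2 ≤ D := by
    have := le_max_right B 1
    omega
  have hDB : B < D := lt_of_le_of_lt (le_max_left _ _) hgt
  have hGall : ∀ (i : Fin m) (x : Fin n → ℝ), 0 ≤ eval x (homogeneousComponent D (f i)) := by
    intro i x
    obtain ⟨N, q, hq⟩ := sosconvex_gap_sos (hfsc i) (fun _ => (0:ℝ))
    have hGnn : ∀ x', 0 ≤ eval x' (f i - C (eval (fun _ => (0:ℝ)) (f i))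
        - ∑ j, C (eval (fun _ => (0:ℝ)) (pderiv j (f i))) * (X j - C ((fun _ => (0:ℝ)) j))) :=
      fun x' => hq ▸ eval_sum_sq_nonneg q x'
    have hGdeg := (gapexpr_deg_le (f i) (fun _ => (0:ℝ))).trans
      (max_le (Finset.le_sup (f := fun i : Fin m => (f i).totalDegree) (Finset.mem_univ i))
        (by omega))
    have := hc_nonneg_of_nonneg hD2 hGnn hGdeg x
    rwa [hc_gapexpr_eq (f i) (fun _ => (0:ℝ)) hD2] at this
  have hsum0 : ∑ i, homogeneousComponent D (f i) = 0 := by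
    rw [← map_sum]
    exact homogeneousComponent_eq_zero _ _ (lt_of_le_of_lt hB hDB)
  have hzero : ∀ i, homogeneousComponent D (f i) = 0 := by
    intro i
    refine MvPolynomial.funext fun x => ?_
    have h1 : ∑ i, eval x (homogeneousComponent D (f i)) = 0 := by
      rw [← map_sum, hsum0, map_zero]
    have := (Finset.sum_eq_zero_iff_of_nonneg (fun i _ => hGall i x)).mp h1 i (Finset.mem_univ i)
    rw [this, map_zero]
  have hne : (Finset.univ : Finset (Fin m)).Nonempty := by
    rcases (Finset.univ : Finset (Fin m)).eq_empty_or_nonempty with h | h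
    · rw [hDdef, h, Finset.sup_empty] at hD2; simp at hD2
    · exact h
  obtain ⟨i0, -, hi0⟩ := Finset.exists_mem_eq_sup (Finset.univ : Finset (Fin m)) hne
    (fun i : Fin m => (f i).totalDegree)
  have hf0 : f i0 ≠ 0 := by
    intro h
    rw [h, totalDegree_zero] at hi0
    rw [hDdef, hi0] at hD2
    omega
  have := hc_totalDegree_ne_zero hf0
  rw [← hi0, ← hDdef] at this
  exact this (hzero i0)

lemma finsupp_of_sum_le_one {n : ℕ} {α : Fin n →₀ ℕ} (h : (α.sum fun _ e => e) ≤ 1) :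
    α = 0 ∨ ∃ j, α = Finsupp.single j 1 := by
  classical
  rcases eq_or_ne α 0 with h0 | h0
  · exact Or.inl h0
  right
  obtain ⟨j, hj⟩ := Finsupp.ne_iff.mp h0
  rw [Finsupp.coe_zero, Pi.zero_apply] at hj
  have hjs : j ∈ α.support := Finsupp.mem_support_iff.mpr hj
  have hle : α j ≤ α.sum fun _ e => e :=
    Finset.single_le_sum (f := fun i => α i) (fun i _ => Nat.zero_le _) hjs
  refine ⟨j, Finsupp.ext fun i => ?_⟩
  rcases eq_or_ne i j with rfl | hij
  · rw [Finsupp.single_eq_same]; omega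
  · rw [Finsupp.single_eq_of_ne hij]
    by_contra hne
    have his : i ∈ α.support := Finsupp.mem_support_iff.mpr hne
    have hsub : ({i, j} : Finset (Fin n)) ⊆ α.support := by
      intro a ha
      rcases Finset.mem_insert.mp ha with rfl | ha
      · exact his
      · rw [Finset.mem_singleton.mp ha]; exact hjs
    have h2 : α i + α j ≤ α.sum fun _ e => e := by
      rw [show (α.sum fun _ e => e) = ∑ a ∈ α.support, α a from rfl]
      rw [← Finset.sum_pair hij]
      exact Finset.sum_le_sum_of_subset hsub
    omega

lemma eval_riesz_affine {n : ℕ} {y : (Fin n →₀ ℕ) → ℝ} (hy0 : y 0 = 1)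
    {p : MvPolynomial (Fin n) ℝ} (hp : p.totalDegree ≤ 1) :
    eval (fun l => Riesz n y (X l)) p = Riesz n y p := by
  conv_lhs => rw [← p.support_sum_monomial_coeff]
  conv_rhs => rw [← p.support_sum_monomial_coeff]
  rw [map_sum, riesz_finset_sum]
  refine Finset.sum_congr rfl fun α hα => ?_
  have hα1 : (α.sum fun _ e => e) ≤ 1 := le_trans (le_totalDegree hα) hp
  rw [riesz_monomial, eval_monomial]
  rcases finsupp_of_sum_le_one hα1 with rfl | ⟨j, rfl⟩
  · rw [hy0, Finsupp.prod_zero_index, mul_one]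
  · rw [Finsupp.prod_single_index (by rw [pow_zero]), pow_one, riesz_X]

lemma core_jensen {n k : ℕ} {y : (Fin n →₀ ℕ) → ℝ} (hy0 : y 0 = 1)
    (Δ : Set (Fin n))
    (hpsd : ∀ q : MvPolynomial (Fin n) ℝ, q ∈ supported ℝ Δ → q.totalDegree ≤ k →
      0 ≤ Riesz n y (q ^ 2))
    {p : MvPolynomial (Fin n) ℝ} (hpc : SOSConvex n p) (hps : p ∈ supported ℝ Δ)
    (hpd : p.totalDegree ≤ 2 * k + 1) :
    eval (fun l => Riesz n y (X l)) p ≤ Riesz n y p := by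
  classical
  set v : Fin n → ℝ := fun l => Riesz n y (X l) with hv
  obtain ⟨N, q, hq⟩ := sosconvex_gap_sos hpc v
  haveI : DecidablePred (· ∈ Δ) := Classical.decPred _
  set φ : MvPolynomial (Fin n) ℝ →ₐ[ℝ] MvPolynomial (Fin n) ℝ :=
    aeval (fun j => if j ∈ Δ then X j else C (v j)) with hφ
  set gap : MvPolynomial (Fin n) ℝ :=
    p - C (eval v p) - ∑ j, C (eval v (pderiv j p)) * (X j - C (v j)) with hgap
  have hφC : ∀ a : ℝ, φ (C a) = C a := by
    intro a
    rw [hφ, ← algebraMap_eq, AlgHom.commutes]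
  have hφgap : φ gap = gap := by
    rw [hgap, map_sub, map_sub, hφ, subst_eq_self_of_supported Δ v hps, ← hφ, hφC]
    congr 1
    rw [map_sum]
    refine Finset.sum_congr rfl fun j _ => ?_
    by_cases hj : j ∈ Δ
    · rw [_root_.map_mul, hφC, map_sub, hφC, hφ, aeval_X, if_pos hj]
    · rw [pderiv_eq_zero_of_supported Δ hps hj]
      simp
  have hq' : gap = ∑ t, (φ (q t)) ^ 2 := by
    calc gap = φ gap := hφgap.symm
      _ = φ (∑ t, (q t) ^ 2) := by rw [← hq, hgap]
      _ = ∑ t, (φ (q t)) ^ 2 := by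
          rw [map_sum]
          exact Finset.sum_congr rfl fun t _ => map_pow φ (q t) 2
  have hdeg' : ∀ t, (φ (q t)).totalDegree ≤ k := by
    apply sos_pieces_deg_le
    rw [← hq', hgap]
    refine (gapexpr_deg_le p v).trans ?_
    exact max_le hpd (by omega)
  have hL : 0 ≤ Riesz n y gap := by
    rw [hq', riesz_finset_sum]
    refine Finset.sum_nonneg fun t _ => ?_
    exact hpsd (φ (q t)) (subst_mem_supported Δ v (q t)) (hdeg' t)
  have hterm : ∀ j, Riesz n y (C (eval v (pderiv j p)) * (X j - C (v j))) = 0 := by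
    intro j
    rw [show C (eval v (pderiv j p)) * (X j - C (v j))
        = (eval v (pderiv j p)) • (X j - C (v j)) from (smul_eq_C_mul _ _).symm]
    rw [riesz_smul, riesz_sub, riesz_X, riesz_C, hy0, mul_one]
    have : v j = y (Finsupp.single j 1) := by rw [hv]; exact riesz_X j
    rw [← this, sub_self, mul_zero]
  have hRgap : Riesz n y gap = Riesz n y p - eval v p := by
    rw [hgap, riesz_sub, riesz_sub, riesz_C, hy0, mul_one, riesz_finset_sum]
    rw [Finset.sum_congr rfl fun j _ => hterm j, Finset.sum_const_zero, sub_zero]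
  rw [hRgap] at hL
  linarith


theorem stmt_9
    (n m : ℕ) (hn : 1 ≤ n) (hm : 1 ≤ m)
    (Δ : Fin m → Finset (Fin n))
    (ℓ s : Fin m → ℕ)
    (f : Fin m → MvPolynomial (Fin n) ℝ)
    (h : (i : Fin m) → Fin (ℓ i) → MvPolynomial (Fin n) ℝ)
    (g : (i : Fin m) → Fin (s i) → MvPolynomial (Fin n) ℝ)
    (hf : ∀ i, f i ∈ MvPolynomial.supported ℝ (↑(Δ i) : Set (Fin n)))
    (hh : ∀ i j, h i j ∈ MvPolynomial.supported ℝ (↑(Δ i) : Set (Fin n)))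
    (hg : ∀ i j, g i j ∈ MvPolynomial.supported ℝ (↑(Δ i) : Set (Fin n)))
    (K : Set (Fin n → ℝ))
    (hKdef : K = { x | (∀ i j, MvPolynomial.eval x (h i j) = 0) ∧
        (∀ i j, 0 ≤ MvPolynomial.eval x (g i j)) })
    -- each `h_{i,j}` is linear, each `f_i` and each `-g_{i,j}` is SOS-convex:
    (hhlin : ∀ i j, (h i j).totalDegree ≤ 1)
    (hfsc : ∀ i, SOSConvex n (f i))
    (hgsc : ∀ i j, SOSConvex n (-(g i j)))
    (k : ℕ)
    -- `k ≥ k₀`: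
    (hkf : (∑ i, f i).totalDegree ≤ 2 * k)
    (hkh : ∀ i j, (h i j).totalDegree ≤ 2 * k)
    (hkg : ∀ i j, (g i j).totalDegree ≤ 2 * k)
    (y : (Fin n →₀ ℕ) → ℝ)
    (hy : MomFeas n m Δ h g k y) :
    (fun l : Fin n => Riesz n y (MvPolynomial.X l)) ∈ K ∧
    MvPolynomial.eval (fun l : Fin n => Riesz n y (MvPolynomial.X l)) (∑ i, f i) ≤
      Riesz n y (∑ i, f i) ∧
    (∀ fmin : ℝ, IsGLB ((fun x => MvPolynomial.eval x (∑ i, f i)) '' K) fmin →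
      fmin ≤ Riesz n y (∑ i, f i)) ∧
    ((∀ y' : (Fin n →₀ ℕ) → ℝ, MomFeas n m Δ h g k y' →
        Riesz n y (∑ i, f i) ≤ Riesz n y' (∑ i, f i)) →
      ∀ x ∈ K, MvPolynomial.eval (fun l : Fin n => Riesz n y (MvPolynomial.X l)) (∑ i, f i) ≤
        MvPolynomial.eval x (∑ i, f i)) := by
  classical
  obtain ⟨hy0, hyh, hyp, hyg⟩ := hy
  have hvK : (fun l : Fin n => Riesz n y (X l)) ∈ K := by
    rw [hKdef]
    refine ⟨fun i j => ?_, fun i j => ?_⟩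
    · have h1 : Riesz n y (h i j) = 0 := by
        have := hyh i j 1 (one_mem _) (by rw [mul_one]; exact hkh i j)
        rwa [mul_one] at this
      rw [eval_riesz_affine hy0 (hhlin i j), h1]
    · have hLg : 0 ≤ Riesz n y (g i j) := by
        have := hyg i j 1 (one_mem _) (by rw [one_pow, mul_one]; exact hkg i j)
        rwa [one_pow, mul_one] at this
      have hjensen : eval (fun l : Fin n => Riesz n y (X l)) (-(g i j))
          ≤ Riesz n y (-(g i j)) := by
        refine core_jensen hy0 _ (fun q hq hdq => hyp i q hq hdq) (hgsc i j)
          (Subalgebra.neg_mem _ (hg i j)) ?_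
        rw [totalDegree_neg]
        exact (hkg i j).trans (by omega)
      rw [map_neg, riesz_neg] at hjensen
      linarith
  have hdegf : ∀ i, (f i).totalDegree ≤ 2 * k + 1 := by
    intro i
    exact le_trans (deg_le_of_sosconvex_sum f hfsc hkf i) (max_le (by omega) (by omega))
  have hjf : ∀ i, eval (fun l : Fin n => Riesz n y (X l)) (f i) ≤ Riesz n y (f i) := fun i =>
    core_jensen hy0 _ (fun q hq hdq => hyp i q hq hdq) (hfsc i) (hf i) (hdegf i)
  have hmain : eval (fun l : Fin n => Riesz n y (X l)) (∑ i, f i) ≤ Riesz n y (∑ i, f i) := by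
    rw [map_sum, riesz_finset_sum]
    exact Finset.sum_le_sum fun i _ => hjf i
  refine ⟨hvK, hmain, ?_, ?_⟩
  · intro fmin hglb
    exact le_trans (hglb.1 ⟨_, hvK, rfl⟩) hmain
  · intro hmin x hx
    rw [hKdef] at hx
    set y' : (Fin n →₀ ℕ) → ℝ := fun α => eval x (monomial α 1) with hy'
    have hriesz' : ∀ p : MvPolynomial (Fin n) ℝ, Riesz n y' p = eval x p := by
      intro p
      rw [Riesz]
      conv_rhs => rw [← p.support_sum_monomial_coeff]
      rw [map_sum]
      refine Finset.sum_congr rfl fun α _ => ?_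
      rw [hy']
      simp only [eval_monomial, one_mul]
    have hfeas' : MomFeas n m Δ h g k y' := by
      refine ⟨?_, ?_, ?_, ?_⟩
      · rw [hy']
        simp [monomial_zero']
      · intro i j q' hqs hqd
        rw [hriesz', _root_.map_mul, hx.1 i j, zero_mul]
      · intro i p hps hpd
        rw [hriesz', map_pow]
        positivity
      · intro i j p hps hpd
        rw [hriesz', _root_.map_mul, map_pow]
        have := hx.2 i j
        positivity
    have hcmp := hmin y' hfeas'
    rw [hriesz'] at hcmp
    exact le_trans hmain hcmp
end
end
end
end

section
/- Suppose K ≠ ∅, for each i the projection π_{Δ_i}(K_{Δ_i}) is a compact subset of (Δ_i → ℝ), and Δ_1,…,Δ_m satisfy the running intersection property. For 2 ≤ t ≤ m set Δ̂_{t−1} := Δ_1 ∪ ⋯ ∪ Δ_{t−1} and I_t := Δ̂_{t−1} ∩ Δ_t. If for every t with 2 ≤ t ≤ m the sets π_{I_t}(K_{Δ_1} ∩ ⋯ ∩ K_{Δ_{t−1}}) and π_{I_t}(K_{Δ_t}) are finite, then Assumption 4.1 holds: there exist polynomials p_1,…,p_m with p_i ∈ ℝ[x_{Δ_i}], p_1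 + ⋯ + p_m + f_min = 0, and f_i + p_i ≥ 0 at every point of K_{Δ_i}, for each i. -/
open MvPolynomial

noncomputable section

/-- Restriction of a vector in `ℝ^n` to the coordinates in `Γ`. -/
def projTo (n : ℕ) (Γ : Finset (Fin n)) (x : Fin n → ℝ) : {a : Fin n // a ∈ Γ} → ℝ :=
  fun l => x l.1

/-- The running intersection property for `Δ_1, …, Δ_m` (0-indexed). -/
def RIP (n m : ℕ) (Δ : Fin m → Finset (Fin n)) : Prop :=
  ∀ j : Fin m, 0 < (j : ℕ) →
    ∃ t : Fin m, (t : ℕ) < (j : ℕ) ∧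
      Δ j ∩ ((Finset.univ.filter (fun i : Fin m => (i : ℕ) < (j : ℕ))).biUnion Δ) ⊆ Δ t

lemma eval_congr_of_supported {n : ℕ} {s : Set (Fin n)} {p : MvPolynomial (Fin n) ℝ}
    (hp : p ∈ MvPolynomial.supported ℝ s) {x y : Fin n → ℝ}
    (hxy : ∀ j ∈ s, x j = y j) : eval x p = eval y p := by
  rw [supported_eq_range_rename, AlgHom.mem_range] at hp
  obtain ⟨q, rfl⟩ := hp
  rw [eval_rename, eval_rename]
  have : x ∘ (Subtype.val : s → Fin n) = y ∘ Subtype.val := funext fun j => hxy j.1 j.2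
  rw [this]

lemma bdd_of_compact_proj {n : ℕ} (Γ : Finset (Fin n)) (Kset : Set (Fin n → ℝ))
    (hc : IsCompact (projTo n Γ '' Kset)) (q : MvPolynomial (Fin n) ℝ)
    (hq : q ∈ MvPolynomial.supported ℝ (↑Γ : Set (Fin n))) :
    BddBelow ((fun x => eval x q) '' Kset) := by
  rw [supported_eq_range_rename, AlgHom.mem_range] at hq
  obtain ⟨q₀, rfl⟩ := hq
  have h1 : ((fun x => eval x ((rename ((↑) : (↑Γ : Set (Fin n)) → Fin n)) q₀)) '' Kset)
      = (fun y : {a : Fin n // a ∈ Γ} → ℝ => eval (fun l => y ⟨l.1, l.2⟩) q₀) '' (projTo n Γ '' Kset) := by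
    rw [Set.image_image]
    apply Set.image_congr
    intro x _
    rw [eval_rename]
    rfl
  rw [h1]
  exact ((hc.image (MvPolynomial.continuous_eval _ |>.comp (by fun_prop)))).bddBelow


lemma interp {n : ℕ} (I : Finset (Fin n)) (S : Set ({a : Fin n // a ∈ I} → ℝ))
    (hS : S.Finite) (v : ({a : Fin n // a ∈ I} → ℝ) → ℝ) :
    ∃ Φ ∈ MvPolynomial.supported ℝ (↑I : Set (Fin n)),
      ∀ x : Fin n → ℝ, projTo n I x ∈ S → eval x Φ = v (projTo n I x) := by
  classical
  set T := hS.toFinset with hT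
  set Q : ({a : Fin n // a ∈ I} → ℝ) → ({a : Fin n // a ∈ I} → ℝ) → MvPolynomial (Fin n) ℝ :=
    fun y z => if h : ∃ c, y c ≠ z c then
      C ((y h.choose - z h.choose)⁻¹) * (X (h.choose).1 - C (z h.choose)) else 1 with hQ
  have hQsupp : ∀ y z, Q y z ∈ MvPolynomial.supported ℝ (↑I : Set (Fin n)) := by
    intro y z
    rw [hQ]
    dsimp only
    split
    · rename_i h
      exact mul_mem (by rw [← MvPolynomial.algebraMap_eq]; exact Subalgebra.algebraMap_mem _ _)
        (sub_mem (X_mem_supported.mpr h.choose.2) (by rw [← MvPolynomial.algebraMap_eq]; exact Subalgebra.algebraMap_mem _ _))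
    · exact one_mem _
  have hQeval1 : ∀ (y z) (x : Fin n → ℝ), y ≠ z → projTo n I x = y → eval x (Q y z) = 1 := by
    intro y z x hyz hx
    have h : ∃ c, y c ≠ z c := by
      by_contra hcon; push_neg at hcon; exact hyz (funext hcon)
    rw [hQ]
    dsimp only
    rw [dif_pos h]
    have hxc : x (h.choose).1 = y h.choose := congrFun hx h.choose
    simp only [map_mul, map_sub, eval_C, eval_X, hxc]
    exact inv_mul_cancel₀ (sub_ne_zero.mpr h.choose_spec)
  have hQeval0 : ∀ (y z) (x : Fin n → ℝ), y ≠ z → projTo n I x = z → eval x (Q y z) = 0 := by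
    intro y z x hyz hx
    have h : ∃ c, y c ≠ z c := by
      by_contra hcon; push_neg at hcon; exact hyz (funext hcon)
    rw [hQ]
    dsimp only
    rw [dif_pos h]
    have hxc : x (h.choose).1 = z h.choose := congrFun hx h.choose
    simp [hxc]
  refine ⟨∑ y ∈ T, C (v y) * ∏ z ∈ T.erase y, Q y z, ?_, ?_⟩
  · exact sum_mem fun y _ => mul_mem (by rw [← MvPolynomial.algebraMap_eq]; exact Subalgebra.algebraMap_mem _ _)
      (prod_mem fun z _ => hQsupp y z)
  · intro x hx
    set w := projTo n I x with hw
    have hwT : w ∈ T := by rw [hT]; simpa using hx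
    rw [map_sum]
    rw [Finset.sum_eq_single w]
    · rw [map_mul, eval_C, map_prod]
      have : ∀ z ∈ T.erase w, eval x (Q w z) = 1 := by
        intro z hz
        exact hQeval1 w z x (fun hh => (Finset.mem_erase.mp hz).1 hh.symm) hw.symm
      rw [Finset.prod_congr rfl this]
      simp
    · intro y hy hyw
      rw [map_mul, map_prod]
      have : eval x (Q y w) = 0 := hQeval0 y w x hyw hw.symm
      rw [Finset.prod_eq_zero (Finset.mem_erase.mpr ⟨Ne.symm hyw, hwT⟩) this, mul_zero]
    · intro hwT'; exact absurd hwT hwT'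

lemma aux {n : ℕ} (Δ : ℕ → Finset (Fin n)) (KΔ : ℕ → Set (Fin n → ℝ))
    (hloc : ∀ i, ∀ x y : Fin n → ℝ, (∀ j ∈ Δ i, x j = y j) → x ∈ KΔ i → y ∈ KΔ i)
    (hbdd : ∀ i, ∀ q ∈ MvPolynomial.supported ℝ (↑(Δ i) : Set (Fin n)),
      BddBelow ((fun x => eval x q) '' KΔ i))
    (hrip : ∀ t, 0 < t → ∃ r < t, ((Finset.range t).biUnion Δ ∩ Δ t) ⊆ Δ r)
    (hfin : ∀ t, 0 < t →
      Set.Finite (projTo n ((Finset.range t).biUnion Δ ∩ Δ t) '' {x | ∀ i < t, x ∈ KΔ i}) ∧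
      Set.Finite (projTo n ((Finset.range t).biUnion Δ ∩ Δ t) '' KΔ t)) :
    ∀ m, 0 < m → ∀ f : ℕ → MvPolynomial (Fin n) ℝ,
      (∀ i < m, f i ∈ MvPolynomial.supported ℝ (↑(Δ i) : Set (Fin n))) →
      {x : Fin n → ℝ | ∀ i < m, x ∈ KΔ i}.Nonempty →
      ∀ M : ℝ,
      IsGLB ((fun x => eval x (∑ i ∈ Finset.range m, f i)) '' {x | ∀ i < m, x ∈ KΔ i}) M →
      ∃ p : ℕ → MvPolynomial (Fin n) ℝ,
        (∀ i < m, p i ∈ MvPolynomial.supported ℝ (↑(Δ i) : Set (Fin n))) ∧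
        (∑ i ∈ Finset.range m, p i) + C M = 0 ∧
        (∀ i < m, ∀ x ∈ KΔ i, 0 ≤ eval x (f i) + eval x (p i)) := by
  intro m
  induction m with
  | zero => omega
  | succ m ih =>
    intro _ f hf hne M hglb
    classical
    rcases Nat.eq_zero_or_pos m with rfl | hm'
    · -- base case : one block
      refine ⟨fun _ => -C M, fun i _ => neg_mem (by rw [← MvPolynomial.algebraMap_eq]; exact Subalgebra.algebraMap_mem _ _),
        by simp, ?_⟩
      intro i hi x hx
      have hi0 : i = 0 := by omega
      subst hi0
      have hxmem : x ∈ {x : Fin n → ℝ | ∀ i < 1, x ∈ KΔ i} := by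
        intro i hi
        have : i = 0 := by omega
        exact this ▸ hx
      have := hglb.1 ⟨x, hxmem, rfl⟩
      simp only [zero_add, Finset.range_one, Finset.sum_singleton] at this
      simp only [map_neg, eval_C]
      linarith
    · -- inductive step, m ≥ 1, total m+1 blocks
      set I : Finset (Fin n) := (Finset.range m).biUnion Δ ∩ Δ m with hI
      set J : Set (Fin n → ℝ) := {x | ∀ i < m, x ∈ KΔ i} with hJ
      set F : MvPolynomial (Fin n) ℝ := ∑ i ∈ Finset.range m, f i with hF
      have hJne : J.Nonempty := hne.imp fun x hx i hi => hx i (by omega)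
      obtain ⟨hS1fin, hS2fin⟩ := hfin m hm'
      set S1 : Set ({a : Fin n // a ∈ I} → ℝ) := projTo n I '' J with hS1
      set S2 : Set ({a : Fin n // a ∈ I} → ℝ) := projTo n I '' KΔ m with hS2
      -- lower bounds for the individual f i on KΔ i
      have hBex : ∀ i, ∃ b : ℝ, i < m + 1 → ∀ x ∈ KΔ i, b ≤ eval x (f i) := by
        intro i
        by_cases hi : i < m + 1
        · obtain ⟨b, hb⟩ := hbdd i (f i) (hf i hi)
          exact ⟨b, fun _ x hx => hb ⟨x, hx, rfl⟩⟩
        · exact ⟨0, fun h => absurd h hi⟩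
      choose B hB using hBex
      have hFlb : ∀ x ∈ J, (∑ i ∈ Finset.range m, B i) ≤ eval x F := by
        intro x hx
        rw [hF, map_sum]
        exact Finset.sum_le_sum fun i hi =>
          hB i (by simpa using Nat.lt_succ_of_lt (Finset.mem_range.mp hi)) x
            (hx i (Finset.mem_range.mp hi))
      -- the fiber-infimum function
      set η : ({a : Fin n // a ∈ I} → ℝ) → ℝ := fun y =>
        if y ∈ S1 then sInf ((fun x => eval x F) '' {x ∈ J | projTo n I x = y})
        else M - B m with hη
      have hfibbdd : ∀ y, BddBelow ((fun x => eval x F) '' {x ∈ J | projTo n I x = y}) := by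
        intro y
        exact ⟨∑ i ∈ Finset.range m, B i, by rintro a ⟨x', hx', rfl⟩; exact hFlb x' hx'.1⟩
      have claim2 : ∀ x ∈ J, η (projTo n I x) ≤ eval x F := by
        intro x hx
        have hyS : projTo n I x ∈ S1 := ⟨x, hx, rfl⟩
        rw [hη]
        simp only [if_pos hyS]
        exact csInf_le (hfibbdd _) ⟨x, ⟨hx, rfl⟩, rfl⟩
      have claim1 : ∀ x ∈ KΔ m, M - η (projTo n I x) ≤ eval x (f m) := by
        intro x hx
        by_cases hy : projTo n I x ∈ S1
        · rw [hη]
          simp only [if_pos hy]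
          rw [sub_le_iff_le_add, ← sub_le_iff_le_add']
          obtain ⟨x0, hx0, hx0p⟩ := hy
          refine le_csInf ⟨eval x0 F, ⟨x0, ⟨hx0, hx0p⟩, rfl⟩⟩ ?_
          rintro a ⟨x', ⟨hx'J, hx'p⟩, rfl⟩
          -- glue z from x (on Δ m) and x' (elsewhere)
          set z : Fin n → ℝ := fun j => if j ∈ Δ m then x j else x' j with hz
          have hxx' : ∀ j ∈ I, x j = x' j := by
            intro j hj
            have h1 : projTo n I x ⟨j, hj⟩ = projTo n I x' ⟨j, hj⟩ := by rw [hx'p]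
            exact h1
          have hzL : z ∈ KΔ m := hloc m x z (fun j hj => by rw [hz]; simp [hj]) hx
          have hzΔ : ∀ j ∈ (Finset.range m).biUnion Δ, z j = x' j := by
            intro j hj
            rw [hz]
            dsimp only
            split
            · rename_i hjm
              exact hxx' j (Finset.mem_inter.mpr ⟨hj, hjm⟩)
            · rfl
          have hzJ : ∀ i < m, z ∈ KΔ i := by
            intro i hi
            refine hloc i x' z (fun j hj => ?_) (hx'J i hi)
            exact (hzΔ j (Finset.mem_biUnion.mpr ⟨i, Finset.mem_range.mpr hi, hj⟩)).symm
          have hzmem : z ∈ {x : Fin n → ℝ | ∀ i < m + 1, x ∈ KΔ i} := by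
            intro i hi
            rcases Nat.lt_succ_iff_lt_or_eq.mp hi with h | rfl
            · exact hzJ i h
            · exact hzL
          have hMz := hglb.1 ⟨z, hzmem, rfl⟩
          rw [Finset.sum_range_succ] at hMz
          simp only [map_add] at hMz
          have hFz : eval z F = eval x' F := by
            refine eval_congr_of_supported ?_ (fun j hj => hzΔ j hj)
            rw [hF]
            refine sum_mem fun i hi => ?_
            refine MvPolynomial.supported_mono ?_ (hf i (by
              simpa using Nat.lt_succ_of_lt (Finset.mem_range.mp hi)))
            exact Finset.coe_subset.mpr fun j hj => Finset.mem_biUnion.mpr ⟨i, hi, hj⟩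
          have hfz : eval z (f m) = eval x (f m) := by
            refine eval_congr_of_supported (hf m (by omega)) (fun j hj => ?_)
            have hj' : j ∈ Δ m := hj
            rw [hz]; simp [hj']
          rw [← hF, hFz, hfz] at hMz
          linarith
        · rw [hη]
          simp only [if_neg hy]
          have := hB m (by omega) x hx
          linarith
      -- interpolate η by a polynomial in the variables of I
      obtain ⟨Φ, hΦsupp, hΦ⟩ := interp I (S1 ∪ S2) (hS1fin.union hS2fin) η
      -- running intersection property
      obtain ⟨r, hrm, hrI⟩ := hrip m hm'
      have hrm' : r ∈ Finset.range m := Finset.mem_range.mpr hrm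
      have hΦr : Φ ∈ MvPolynomial.supported ℝ (↑(Δ r) : Set (Fin n)) :=
        MvPolynomial.supported_mono (Finset.coe_subset.mpr hrI) hΦsupp
      have hΦm : Φ ∈ MvPolynomial.supported ℝ (↑(Δ m) : Set (Fin n)) :=
        MvPolynomial.supported_mono (Finset.coe_subset.mpr Finset.inter_subset_right) hΦsupp
      have hupd_sum : ∀ (q : ℕ → MvPolynomial (Fin n) ℝ) (ψ : MvPolynomial (Fin n) ℝ),
          ∑ i ∈ Finset.range m, Function.update q r (q r - ψ) i
            = (∑ i ∈ Finset.range m, q i) - ψ := by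
        intro q ψ
        rw [Finset.sum_update_of_mem hrm', Finset.sdiff_singleton_eq_erase, sub_add_eq_add_sub,
          Finset.add_sum_erase _ q hrm']
      set f' : ℕ → MvPolynomial (Fin n) ℝ := Function.update f r (f r - Φ) with hf'def
      have hf' : ∀ i < m, f' i ∈ MvPolynomial.supported ℝ (↑(Δ i) : Set (Fin n)) := by
        intro i hi
        rw [hf'def]
        by_cases hir : i = r
        · subst hir
          rw [Function.update_self]
          exact sub_mem (hf i (by omega)) hΦr
        · rw [Function.update_of_ne hir]
          exact hf i (by omega)
      have hΦJ : ∀ x ∈ J, eval x Φ = η (projTo n I x) := fun x hx =>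
        hΦ x (Or.inl ⟨x, hx, rfl⟩)
      have hsumf' : ∑ i ∈ Finset.range m, f' i = F - Φ := hupd_sum f Φ
      have hglb' : IsGLB ((fun x => eval x (∑ i ∈ Finset.range m, f' i)) '' J) 0 := by
        rw [hsumf']
        constructor
        · rintro a ⟨x, hx, rfl⟩
          simp only [map_sub]
          rw [hΦJ x hx]
          have := claim2 x hx
          linarith
        · intro b hb
          obtain ⟨x0, hx0⟩ := hJne
          set y0 := projTo n I x0 with hy0
          have hy0S : y0 ∈ S1 := ⟨x0, hx0, rfl⟩
          have hkey : ∀ x' ∈ {x ∈ J | projTo n I x = y0}, η y0 + b ≤ eval x' F := by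
            rintro x' ⟨hx'J, hx'p⟩
            have hb' := hb ⟨x', hx'J, rfl⟩
            simp only [map_sub] at hb'
            rw [hΦJ x' hx'J, hx'p] at hb'
            linarith
          have h1 : η y0 + b ≤ sInf ((fun x => eval x F) '' {x ∈ J | projTo n I x = y0}) := by
            refine le_csInf ⟨eval x0 F, ⟨x0, ⟨hx0, rfl⟩, rfl⟩⟩ ?_
            rintro a ⟨x', hx', rfl⟩
            exact hkey x' hx'
          have h2 : η y0 = sInf ((fun x => eval x F) '' {x ∈ J | projTo n I x = y0}) := by
            rw [hη]; simp only [if_pos hy0S]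
          linarith [h1, h2.ge]
      obtain ⟨p', hp'supp, hp'sum, hp'pos⟩ := ih hm' f' hf' hJne 0 hglb'
      have hp'sum0 : ∑ i ∈ Finset.range m, p' i = 0 := by
        have := hp'sum
        rw [map_zero, add_zero] at this
        exact this
      -- assemble the answer
      refine ⟨Function.update (Function.update p' r (p' r - Φ)) m (Φ - C M), ?_, ?_, ?_⟩
      · intro i hi
        by_cases him : i = m
        · subst him
          rw [Function.update_self]
          exact sub_mem hΦm (by rw [← MvPolynomial.algebraMap_eq]; exact Subalgebra.algebraMap_mem _ _)
        · rw [Function.update_of_ne him]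
          by_cases hir : i = r
          · subst hir
            rw [Function.update_self]
            exact sub_mem (hp'supp i hrm) hΦr
          · rw [Function.update_of_ne hir]
            exact hp'supp i (by omega)
      · rw [Finset.sum_range_succ, Function.update_self]
        have hsum1 : ∑ i ∈ Finset.range m, Function.update (Function.update p' r (p' r - Φ)) m
            (Φ - C M) i = ∑ i ∈ Finset.range m, Function.update p' r (p' r - Φ) i := by
          refine Finset.sum_congr rfl fun i hi => ?_
          rw [Function.update_of_ne (by have := Finset.mem_range.mp hi; omega)]
        rw [hsum1, hupd_sum p' Φ, hp'sum0]
        ring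
      · intro i hi x hx
        by_cases him : i = m
        · subst him
          rw [Function.update_self]
          have h1 := claim1 x hx
          have h2 : eval x Φ = η (projTo n I x) := hΦ x (Or.inr ⟨x, hx, rfl⟩)
          simp only [map_sub, eval_C, h2]
          linarith
        · rw [Function.update_of_ne him]
          have hi' : i < m := by omega
          by_cases hir : i = r
          · subst hir
            rw [Function.update_self]
            have := hp'pos i hi' x hx
            rw [hf'def, Function.update_self] at this
            simp only [map_sub] at this ⊢
            linarith
          · rw [Function.update_of_ne hir]
            have := hp'pos i hi' x hx
            rw [hf'def, Function.update_of_ne hir] at this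
            exact this

theorem stmt_13
    (n m : ℕ) (hn : 1 ≤ n) (hm : 1 ≤ m)
    (Δ : Fin m → Finset (Fin n))
    (ℓ s : Fin m → ℕ)
    (f : Fin m → MvPolynomial (Fin n) ℝ)
    (h : (i : Fin m) → Fin (ℓ i) → MvPolynomial (Fin n) ℝ)
    (g : (i : Fin m) → Fin (s i) → MvPolynomial (Fin n) ℝ)
    (hf : ∀ i, f i ∈ MvPolynomial.supported ℝ (↑(Δ i) : Set (Fin n)))
    (hh : ∀ i j, h i j ∈ MvPolynomial.supported ℝ (↑(Δ i) : Set (Fin n)))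
    (hg : ∀ i j, g i j ∈ MvPolynomial.supported ℝ (↑(Δ i) : Set (Fin n)))
    (K : Set (Fin n → ℝ))
    (hKdef : K = { x | (∀ i j, MvPolynomial.eval x (h i j) = 0) ∧
        (∀ i j, 0 ≤ MvPolynomial.eval x (g i j)) })
    (KΔ : Fin m → Set (Fin n → ℝ))
    (hKΔdef : ∀ i, KΔ i = { x | (∀ j, MvPolynomial.eval x (h i j) = 0) ∧
        (∀ j, 0 ≤ MvPolynomial.eval x (g i j)) })
    (hKne : K.Nonempty)
    (fmin : ℝ)
    (hfmin : IsGLB ((fun x => MvPolynomial.eval x (∑ i, f i)) '' K) fmin)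
    -- each projection `π_{Δ_i}(K_{Δ_i})` is compact:
    (hcomp : ∀ i, IsCompact (projTo n (Δ i) '' KΔ i))
    (hrip : RIP n m Δ)
    -- for every `t` with `2 ≤ t ≤ m` (0-indexed: `0 < t`), the projections of
    -- `K_{Δ_1} ∩ ⋯ ∩ K_{Δ_{t-1}}` and of `K_{Δ_t}` onto `I_t` are finite:
    (hfin : ∀ t : Fin m, 0 < (t : ℕ) →
      Set.Finite
        (projTo n (((Finset.univ.filter
            (fun i : Fin m => (i : ℕ) < (t : ℕ))).biUnion Δ) ∩ Δ t) ''
          { x : Fin n → ℝ | ∀ i : Fin m, (i : ℕ) < (t : ℕ) → x ∈ KΔ i }) ∧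
      Set.Finite
        (projTo n (((Finset.univ.filter
            (fun i : Fin m => (i : ℕ) < (t : ℕ))).biUnion Δ) ∩ Δ t) '' KΔ t)) :
    ∃ p : Fin m → MvPolynomial (Fin n) ℝ,
      (∀ i, p i ∈ MvPolynomial.supported ℝ (↑(Δ i) : Set (Fin n))) ∧
      (∑ i, p i) + MvPolynomial.C fmin = 0 ∧
      ∀ i, ∀ x ∈ KΔ i, 0 ≤ MvPolynomial.eval x (f i) + MvPolynomial.eval x (p i) := by

  classical
  set Δ' : ℕ → Finset (Fin n) := fun i => if hi : i < m then Δ ⟨i, hi⟩ else ∅ with hΔ'def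
  set KΔ' : ℕ → Set (Fin n → ℝ) :=
    fun i => if hi : i < m then KΔ ⟨i, hi⟩ else Set.univ with hKΔ'def
  set f' : ℕ → MvPolynomial (Fin n) ℝ :=
    fun i => if hi : i < m then f ⟨i, hi⟩ else 0 with hf'def
  -- membership in K is equivalent to membership in all KΔ i
  have hKiff : ∀ x, x ∈ K ↔ ∀ i : Fin m, x ∈ KΔ i := by
    intro x
    rw [hKdef]
    simp only [Set.mem_setOf_eq]
    constructor
    · rintro ⟨h1, h2⟩ i
      rw [hKΔdef i]
      exact ⟨h1 i, h2 i⟩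
    · intro hI
      refine ⟨fun i j => ?_, fun i j => ?_⟩
      · have := hI i; rw [hKΔdef i] at this; exact this.1 j
      · have := hI i; rw [hKΔdef i] at this; exact this.2 j
  have hsetK : {x : Fin n → ℝ | ∀ i < m, x ∈ KΔ' i} = K := by
    ext x
    simp only [Set.mem_setOf_eq]
    rw [hKiff x]
    constructor
    · intro hx i
      have := hx i.1 i.isLt
      simp only [hKΔ'def, dif_pos i.isLt] at this
      simpa using this
    · intro hx i hi
      simp only [hKΔ'def]
      rw [dif_pos hi]
      exact hx ⟨i, hi⟩
  -- locality of KΔ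
  have hlocF : ∀ (i : Fin m) (x y : Fin n → ℝ),
      (∀ j ∈ Δ i, x j = y j) → x ∈ KΔ i → y ∈ KΔ i := by
    intro i x y hxy hx
    rw [hKΔdef i] at hx ⊢
    have key : ∀ q ∈ MvPolynomial.supported ℝ (↑(Δ i) : Set (Fin n)),
        eval y q = eval x q := by
      intro q hq
      exact eval_congr_of_supported hq (fun j hj => (hxy j hj).symm)
    exact ⟨fun j => by rw [key _ (hh i j)]; exact hx.1 j,
      fun j => by rw [key _ (hg i j)]; exact hx.2 j⟩
  have hloc' : ∀ i, ∀ x y : Fin n → ℝ, (∀ j ∈ Δ' i, x j = y j) → x ∈ KΔ' i → y ∈ KΔ' i := by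
    intro i x y hxy hx
    by_cases hi : i < m
    · simp only [hKΔ'def] at hx ⊢
      rw [dif_pos hi] at hx ⊢
      simp only [hΔ'def] at hxy
      rw [dif_pos hi] at hxy
      exact hlocF ⟨i, hi⟩ x y hxy hx
    · simp only [hKΔ'def]
      rw [dif_neg hi]
      trivial
  -- boundedness
  have hbdd' : ∀ i, ∀ q ∈ MvPolynomial.supported ℝ (↑(Δ' i) : Set (Fin n)),
      BddBelow ((fun x => eval x q) '' KΔ' i) := by
    intro i q hq
    by_cases hi : i < m
    · simp only [hΔ'def] at hq
      rw [dif_pos hi] at hq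
      simp only [hKΔ'def]
      rw [dif_pos hi]
      exact bdd_of_compact_proj (Δ ⟨i, hi⟩) (KΔ ⟨i, hi⟩) (hcomp ⟨i, hi⟩) q hq
    · simp only [hΔ'def] at hq
      rw [dif_neg hi] at hq
      refine ⟨eval (fun _ => (0 : ℝ)) q, ?_⟩
      rintro a ⟨x, -, rfl⟩
      exact le_of_eq (eval_congr_of_supported hq (fun j hj => absurd hj (by simp))).symm
  -- biUnion translation
  have hbiU : ∀ t, t < m → (Finset.range t).biUnion Δ'
      = (Finset.univ.filter fun i : Fin m => (i : ℕ) < t).biUnion Δ := by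
    intro t ht
    ext a
    simp only [Finset.mem_biUnion, Finset.mem_range, Finset.mem_filter, Finset.mem_univ,
      true_and]
    constructor
    · rintro ⟨i, hi, ha⟩
      have him : i < m := lt_trans hi ht
      refine ⟨⟨i, him⟩, hi, ?_⟩
      simp only [hΔ'def] at ha
      rw [dif_pos him] at ha
      exact ha
    · rintro ⟨i, hi, ha⟩
      refine ⟨i.1, hi, ?_⟩
      simp only [hΔ'def]
      rw [dif_pos i.isLt]
      simpa using ha
  -- RIP translation
  have hrip' : ∀ t, 0 < t → ∃ r < t, ((Finset.range t).biUnion Δ' ∩ Δ' t) ⊆ Δ' r := by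
    intro t ht0
    by_cases ht : t < m
    · obtain ⟨r, hr, hsub⟩ := hrip ⟨t, ht⟩ ht0
      refine ⟨r.1, hr, ?_⟩
      intro a ha
      rw [Finset.mem_inter] at ha
      have ha2 : a ∈ Δ (⟨t, ht⟩ : Fin m) := by
        have := ha.2
        simp only [hΔ'def] at this
        rw [dif_pos ht] at this
        exact this
      have ha1 : a ∈ (Finset.univ.filter fun i : Fin m => (i : ℕ) < t).biUnion Δ := by
        rw [← hbiU t ht]; exact ha.1
      have := hsub (Finset.mem_inter.mpr ⟨ha2, ha1⟩)
      simp only [hΔ'def]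
      rw [dif_pos r.isLt]
      simpa using this
    · refine ⟨0, ht0, ?_⟩
      have : Δ' t = ∅ := by simp only [hΔ'def]; rw [dif_neg ht]
      rw [this, Finset.inter_empty]
      exact Finset.empty_subset _
  -- set translation for the partial intersections
  have hset' : ∀ t, t < m → {x : Fin n → ℝ | ∀ i' < t, x ∈ KΔ' i'}
      = {x : Fin n → ℝ | ∀ i : Fin m, (i : ℕ) < t → x ∈ KΔ i} := by
    intro t ht
    ext x
    simp only [Set.mem_setOf_eq]
    constructor
    · intro hx i hi
      have := hx i.1 hi
      simp only [hKΔ'def] at this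
      rw [dif_pos i.isLt] at this
      simpa using this
    · intro hx i hi
      have him : i < m := lt_trans hi ht
      simp only [hKΔ'def]
      rw [dif_pos him]
      exact hx ⟨i, him⟩ hi
  -- finiteness translation
  have hfin' : ∀ t, 0 < t →
      Set.Finite (projTo n ((Finset.range t).biUnion Δ' ∩ Δ' t) '' {x | ∀ i < t, x ∈ KΔ' i}) ∧
      Set.Finite (projTo n ((Finset.range t).biUnion Δ' ∩ Δ' t) '' KΔ' t) := by
    intro t ht0
    by_cases ht : t < m
    · obtain ⟨h1, h2⟩ := hfin ⟨t, ht⟩ ht0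
      have e1 : (Finset.range t).biUnion Δ' ∩ Δ' t
          = ((Finset.univ.filter fun i : Fin m => (i : ℕ) < t).biUnion Δ) ∩ Δ ⟨t, ht⟩ := by
        rw [hbiU t ht]
        congr 1
        simp only [hΔ'def]
        rw [dif_pos ht]
      have e2 : KΔ' t = KΔ ⟨t, ht⟩ := by
        simp only [hKΔ'def]; rw [dif_pos ht]
      rw [e1, e2, hset' t ht]
      exact ⟨h1, h2⟩
    · have hempty : Δ' t = ∅ := by simp only [hΔ'def]; rw [dif_neg ht]
      have hIempty : (Finset.range t).biUnion Δ' ∩ Δ' t = (∅ : Finset (Fin n)) := by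
        rw [hempty, Finset.inter_empty]
      rw [hIempty]
      constructor <;>
      · apply Set.Subsingleton.finite
        intro a _ b _
        funext l
        exact absurd l.2 (Finset.notMem_empty _)
  -- remaining hypotheses of `aux`
  have hfaux : ∀ i < m, f' i ∈ MvPolynomial.supported ℝ (↑(Δ' i) : Set (Fin n)) := by
    intro i hi
    simp only [hf'def, hΔ'def]
    rw [dif_pos hi, dif_pos hi]
    exact hf ⟨i, hi⟩
  have hne' : {x : Fin n → ℝ | ∀ i < m, x ∈ KΔ' i}.Nonempty := by
    rw [hsetK]; exact hKne
  have hsumf : ∑ i ∈ Finset.range m, f' i = ∑ i : Fin m, f i := by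
    rw [← Fin.sum_univ_eq_sum_range]
    refine Finset.sum_congr rfl fun i _ => ?_
    simp only [hf'def]
    rw [dif_pos i.isLt]
  have hglbaux : IsGLB ((fun x => eval x (∑ i ∈ Finset.range m, f' i))
      '' {x : Fin n → ℝ | ∀ i < m, x ∈ KΔ' i}) fmin := by
    rw [hsumf, hsetK]
    exact hfmin
  obtain ⟨p, hpsupp, hpsum, hppos⟩ :=
    aux Δ' KΔ' hloc' hbdd' hrip' hfin' m hm f' hfaux hne' fmin hglbaux
  refine ⟨fun i => p i.1, ?_, ?_, ?_⟩
  · intro i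
    have := hpsupp i.1 i.isLt
    simp only [hΔ'def] at this
    rw [dif_pos i.isLt] at this
    simpa using this
  · rw [Fin.sum_univ_eq_sum_range p m]
    exact hpsum
  · intro i x hx
    have hx' : x ∈ KΔ' i.1 := by
      simp only [hKΔ'def]
      rw [dif_pos i.isLt]
      simpa using hx
    have := hppos i.1 i.isLt x hx'
    simp only [hf'def] at this
    rw [dif_pos i.isLt] at this
    simpa using this
end
end

section
/- Let k ≥ k_0. Then f − f_min ∈ Ideal[h]_{spa,2k} + Pre[g]_{spa,2k} if and only if there exist polynomials p_1,…,p_m with p_i ∈ ℝ[x_{Δ_i}] such that p_1 + ⋯ + p_m + f_min = 0 and f_i + p_i ∈ Ideal_{Δ_i}[h_i]_{2k} + Pre_{Δ_i}[g_i]_{2k} for every i ∈ {1,…,m}. -/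
open MvPolynomial Pointwise

noncomputable section

/-- Degree-`2k` truncation of the preordering, `Pre_{Δ}[g]_{2k}`. -/
def PreTrunc (n : ℕ) (Δ : Finset (Fin n)) {s : ℕ}
    (g : Fin s → MvPolynomial (Fin n) ℝ) (k : ℕ) : Set (MvPolynomial (Fin n) ℝ) :=
  { q | ∃ σ : Finset (Fin s) → MvPolynomial (Fin n) ℝ,
      (∀ J, IsSOSIn n Δ (σ J)) ∧
      (∀ J, (σ J * ∏ j ∈ J, g j).totalDegree ≤ 2 * k) ∧
      q = ∑ J : Finset (Fin s), σ J * ∏ j ∈ J, g j }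

lemma spaSum_add_spaSum {n m : ℕ} (G H : Fin m → Set (MvPolynomial (Fin n) ℝ)) :
    SpaSum G + SpaSum H = SpaSum (fun i => G i + H i) := by
  ext q
  constructor
  · rintro ⟨_, ⟨a, ha, rfl⟩, _, ⟨b, hb, rfl⟩, rfl⟩
    exact ⟨a + b, fun i => Set.add_mem_add (ha i) (hb i), Finset.sum_add_distrib.symm⟩
  · rintro ⟨t, ht, rfl⟩
    choose a ha b hb hab using fun i => Set.mem_add.mp (ht i)
    refine ⟨∑ i, a i, ⟨a, ha, rfl⟩, ∑ i, b i, ⟨b, hb, rfl⟩, ?_⟩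
    simp only [← Finset.sum_add_distrib, hab]

lemma sum_sub_mem_spaSum_iff {n m : ℕ} {S : Type*} [SetLike S (MvPolynomial (Fin n) ℝ)]
    [AddSubgroupClass S (MvPolynomial (Fin n) ℝ)] (A : Fin m → S)
    (G : Fin m → Set (MvPolynomial (Fin n) ℝ)) (hG : ∀ i, G i ⊆ A i)
    (f : Fin m → MvPolynomial (Fin n) ℝ) (hf : ∀ i, f i ∈ A i) (c : MvPolynomial (Fin n) ℝ) :
    (∑ i, f i) - c ∈ SpaSum G ↔
      ∃ p : Fin m → MvPolynomial (Fin n) ℝ,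
        (∀ i, p i ∈ A i) ∧ (∑ i, p i) + c = 0 ∧ ∀ i, f i + p i ∈ G i := by
  constructor
  · rintro ⟨t, ht, hsum⟩
    refine ⟨fun i => t i - f i, fun i => sub_mem (hG i (ht i)) (hf i), ?_, fun i => ?_⟩
    · rw [Finset.sum_sub_distrib]
      linear_combination -hsum
    · simpa using ht i
  · rintro ⟨p, -, hsum, hp⟩
    refine ⟨fun i => f i + p i, hp, ?_⟩
    rw [Finset.sum_add_distrib]
    linear_combination -hsum

lemma isSOSIn_supported {n : ℕ} {Δ : Finset (Fin n)} {σ : MvPolynomial (Fin n) ℝ}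
    (hσ : IsSOSIn n Δ σ) : σ ∈ supported ℝ (↑Δ : Set (Fin n)) := by
  obtain ⟨r, p, hp, rfl⟩ := hσ
  exact Subalgebra.sum_mem _ fun l _ => pow_mem (hp l) 2

lemma idealTrunc_subset_supported {n ℓ : ℕ} {Δ : Finset (Fin n)}
    {h : Fin ℓ → MvPolynomial (Fin n) ℝ} (hh : ∀ j, h j ∈ supported ℝ (↑Δ : Set (Fin n)))
    (k : ℕ) : IdealTrunc n Δ h k ⊆ supported ℝ (↑Δ : Set (Fin n)) := by
  rintro _ ⟨φ, hφ, -, rfl⟩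
  exact Subalgebra.sum_mem _ fun j _ => mul_mem (hφ j) (hh j)

lemma preTrunc_subset_supported {n s : ℕ} {Δ : Finset (Fin n)}
    {g : Fin s → MvPolynomial (Fin n) ℝ} (hg : ∀ j, g j ∈ supported ℝ (↑Δ : Set (Fin n)))
    (k : ℕ) : PreTrunc n Δ g k ⊆ supported ℝ (↑Δ : Set (Fin n)) := by
  rintro _ ⟨σ, hσ, -, rfl⟩
  exact Subalgebra.sum_mem _ fun J _ =>
    mul_mem (isSOSIn_supported (hσ J)) (prod_mem fun j _ => hg j)

lemma idealTrunc_add_preTrunc_subset_supported {n ℓ s : ℕ} {Δ : Finset (Fin n)}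
    {h : Fin ℓ → MvPolynomial (Fin n) ℝ} {g : Fin s → MvPolynomial (Fin n) ℝ}
    (hh : ∀ j, h j ∈ supported ℝ (↑Δ : Set (Fin n)))
    (hg : ∀ j, g j ∈ supported ℝ (↑Δ : Set (Fin n))) (k : ℕ) :
    IdealTrunc n Δ h k + PreTrunc n Δ g k ⊆ supported ℝ (↑Δ : Set (Fin n)) := by
  rintro _ ⟨a, ha, b, hb, rfl⟩
  exact add_mem (idealTrunc_subset_supported hh k ha) (preTrunc_subset_supported hg k hb)

theorem stmt_15_general
    (n m : ℕ)
    (Δ : Fin m → Finset (Fin n))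
    (ℓ s : Fin m → ℕ)
    (f : Fin m → MvPolynomial (Fin n) ℝ)
    (h : (i : Fin m) → Fin (ℓ i) → MvPolynomial (Fin n) ℝ)
    (g : (i : Fin m) → Fin (s i) → MvPolynomial (Fin n) ℝ)
    (hf : ∀ i, f i ∈ MvPolynomial.supported ℝ (↑(Δ i) : Set (Fin n)))
    (hh : ∀ i j, h i j ∈ MvPolynomial.supported ℝ (↑(Δ i) : Set (Fin n)))
    (hg : ∀ i j, g i j ∈ MvPolynomial.supported ℝ (↑(Δ i) : Set (Fin n)))
    (fmin : ℝ)
    (k : ℕ) :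
    ((∑ i, f i) - MvPolynomial.C fmin ∈
        SpaSum (fun i => IdealTrunc n (Δ i) (h i) k) +
          SpaSum (fun i => PreTrunc n (Δ i) (g i) k)) ↔
      ∃ p : Fin m → MvPolynomial (Fin n) ℝ,
        (∀ i, p i ∈ MvPolynomial.supported ℝ (↑(Δ i) : Set (Fin n))) ∧
        (∑ i, p i) + MvPolynomial.C fmin = 0 ∧
        ∀ i, f i + p i ∈ IdealTrunc n (Δ i) (h i) k + PreTrunc n (Δ i) (g i) k := by
  rw [spaSum_add_spaSum]
  exact sum_sub_mem_spaSum_iff (fun i => supported ℝ (↑(Δ i) : Set (Fin n))) _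
    (fun i => idealTrunc_add_preTrunc_subset_supported (hh i) (hg i) k) f hf _

theorem stmt_15
    (n m : ℕ) (hn : 1 ≤ n) (hm : 1 ≤ m)
    (Δ : Fin m → Finset (Fin n))
    (ℓ s : Fin m → ℕ)
    (f : Fin m → MvPolynomial (Fin n) ℝ)
    (h : (i : Fin m) → Fin (ℓ i) → MvPolynomial (Fin n) ℝ)
    (g : (i : Fin m) → Fin (s i) → MvPolynomial (Fin n) ℝ)
    (hf : ∀ i, f i ∈ MvPolynomial.supported ℝ (↑(Δ i) : Set (Fin n)))
    (hh : ∀ i j, h i j ∈ MvPolynomial.supported ℝ (↑(Δ i) : Set (Fin n)))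
    (hg : ∀ i j, g i j ∈ MvPolynomial.supported ℝ (↑(Δ i) : Set (Fin n)))
    (K : Set (Fin n → ℝ))
    (hKdef : K = { x | (∀ i j, MvPolynomial.eval x (h i j) = 0) ∧
        (∀ i j, 0 ≤ MvPolynomial.eval x (g i j)) })
    (fmin : ℝ)
    (hfmin : IsGLB ((fun x => MvPolynomial.eval x (∑ i, f i)) '' K) fmin)
    (k : ℕ)
    -- `k ≥ k₀`:
    (hkf : (∑ i, f i).totalDegree ≤ 2 * k)
    (hkh : ∀ i j, (h i j).totalDegree ≤ 2 * k)
    (hkg : ∀ i j, (g i j).totalDegree ≤ 2 * k) :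
    ((∑ i, f i) - MvPolynomial.C fmin ∈
        SpaSum (fun i => IdealTrunc n (Δ i) (h i) k) +
          SpaSum (fun i => PreTrunc n (Δ i) (g i) k)) ↔
      ∃ p : Fin m → MvPolynomial (Fin n) ℝ,
        (∀ i, p i ∈ MvPolynomial.supported ℝ (↑(Δ i) : Set (Fin n))) ∧
        (∑ i, p i) + MvPolynomial.C fmin = 0 ∧
        ∀ i, f i + p i ∈ IdealTrunc n (Δ i) (h i) k + PreTrunc n (Δ i) (g i) k :=
  stmt_15_general n m Δ ℓ s f h g hf hh hg fmin k
end
end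

section
/- Let m = 2. Assume K ≠ ∅ and f is bounded below on K with infimum f_min ∈ ℝ; assume f_1 is bounded below on K_{Δ_1} and f_2 is bounded below on K_{Δ_2}; and, with Δ_{12} := Δ_1 ∩ Δ_2, assume the projections π_{Δ_{12}}(K_{Δ_1}) and π_{Δ_{12}}(K_{Δ_2}) are finite sets. Then there exists a polynomial p ∈ ℝ[x_{Δ_{12}}] such that f_1 + p ≥ 0 at every point of K_{Δ_1}, f_2 − p − f_min ≥ 0 at every point of K_{Δ_2}, and the infimum of f_1 + p over K_{Δ_1} and the infimum of f_2 − p − f_min over K_{Δ_2} are both equal to 0. -/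
open MvPolynomial

noncomputable section

lemma eval_congr_supported {n : ℕ} {Δ : Finset (Fin n)} {p : MvPolynomial (Fin n) ℝ}
    (hp : p ∈ MvPolynomial.supported ℝ (↑Δ : Set (Fin n))) {x y : Fin n → ℝ}
    (hxy : ∀ i ∈ Δ, x i = y i) : MvPolynomial.eval x p = MvPolynomial.eval y p := by
  have hv : (↑p.vars : Set (Fin n)) ⊆ ↑Δ := MvPolynomial.mem_supported.mp hp
  show MvPolynomial.eval₂Hom (RingHom.id ℝ) x p = MvPolynomial.eval₂Hom (RingHom.id ℝ) y p
  exact eval₂Hom_congr' rfl (fun i hi _ => hxy i (by exact_mod_cast hv hi)) rfl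

lemma exists_interp {n : ℕ} (Δ : Finset (Fin n)) (S : Set ({a : Fin n // a ∈ Δ} → ℝ))
    (hS : S.Finite) (v : ({a : Fin n // a ∈ Δ} → ℝ) → ℝ) :
    ∃ p ∈ MvPolynomial.supported ℝ (↑Δ : Set (Fin n)),
      ∀ x : Fin n → ℝ, projTo n Δ x ∈ S → MvPolynomial.eval x p = v (projTo n Δ x) := by
  classical
  set T := hS.toFinset with hT
  set sep : ({a : Fin n // a ∈ Δ} → ℝ) → ({a : Fin n // a ∈ Δ} → ℝ) → MvPolynomial (Fin n) ℝ :=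
    fun z z' => if h : ∃ i, z i ≠ z' i then
      C (z h.choose - z' h.choose)⁻¹ * (X h.choose.1 - C (z' h.choose)) else 1 with hsep
  have hCmem : ∀ r : ℝ, (C r : MvPolynomial (Fin n) ℝ) ∈
      MvPolynomial.supported ℝ (↑Δ : Set (Fin n)) := by
    intro r
    rw [← MvPolynomial.algebraMap_eq]
    exact Subalgebra.algebraMap_mem _ _
  have sep_mem : ∀ z z', sep z z' ∈ MvPolynomial.supported ℝ (↑Δ : Set (Fin n)) := by
    intro z z'
    rw [hsep]
    dsimp only
    split_ifs with h
    · exact mul_mem (hCmem _)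
        (sub_mem (MvPolynomial.X_mem_supported.mpr h.choose.2) (hCmem _))
    · exact one_mem _
  have sep_eval_self : ∀ (z z' : ({a : Fin n // a ∈ Δ} → ℝ)) (x : Fin n → ℝ), z ≠ z' →
      projTo n Δ x = z → MvPolynomial.eval x (sep z z') = 1 := by
    intro z z' x hne hx
    have h : ∃ i, z i ≠ z' i := Function.ne_iff.mp hne
    rw [hsep]
    dsimp only
    rw [dif_pos h]
    have hx' : x h.choose.1 = z h.choose := congrFun hx h.choose
    simp only [map_mul, map_sub, eval_C, eval_X, hx']
    exact inv_mul_cancel₀ (sub_ne_zero.mpr h.choose_spec)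
  have sep_eval_other : ∀ (z z' : ({a : Fin n // a ∈ Δ} → ℝ)) (x : Fin n → ℝ), z ≠ z' →
      projTo n Δ x = z' → MvPolynomial.eval x (sep z z') = 0 := by
    intro z z' x hne hx
    have h : ∃ i, z i ≠ z' i := Function.ne_iff.mp hne
    rw [hsep]
    dsimp only
    rw [dif_pos h]
    have hx' : x h.choose.1 = z' h.choose := congrFun hx h.choose
    simp [hx']
  refine ⟨∑ z ∈ T, C (v z) * ∏ z' ∈ T.erase z, sep z z', ?_, ?_⟩
  · exact Subalgebra.sum_mem _ fun z _ => mul_mem (hCmem _)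
      (Subalgebra.prod_mem _ fun z' _ => sep_mem z z')
  · intro x hx
    have hz₀ : projTo n Δ x ∈ T := by rw [hT, Set.Finite.mem_toFinset]; exact hx
    rw [map_sum]
    rw [Finset.sum_eq_single (projTo n Δ x)]
    · rw [map_mul, eval_C, map_prod]
      rw [Finset.prod_congr rfl (fun z' hz' =>
        sep_eval_self _ z' x (Finset.ne_of_mem_erase hz').symm rfl)]
      simp
    · intro z hz hzne
      rw [map_mul, map_prod]
      rw [Finset.prod_eq_zero (Finset.mem_erase.mpr ⟨hzne.symm, hz₀⟩)
        (sep_eval_other z _ x hzne rfl)]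
      ring
    · intro h; exact absurd hz₀ h
theorem stmt_19
    (n : ℕ) (hn : 1 ≤ n)
    (Δ₁ Δ₂ : Finset (Fin n))
    (ℓ₁ s₁ ℓ₂ s₂ : ℕ)
    (f₁ f₂ : MvPolynomial (Fin n) ℝ)
    (h₁ : Fin ℓ₁ → MvPolynomial (Fin n) ℝ) (g₁ : Fin s₁ → MvPolynomial (Fin n) ℝ)
    (h₂ : Fin ℓ₂ → MvPolynomial (Fin n) ℝ) (g₂ : Fin s₂ → MvPolynomial (Fin n) ℝ)
    (hf₁ : f₁ ∈ MvPolynomial.supported ℝ (↑Δ₁ : Set (Fin n)))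
    (hf₂ : f₂ ∈ MvPolynomial.supported ℝ (↑Δ₂ : Set (Fin n)))
    (hh₁ : ∀ j, h₁ j ∈ MvPolynomial.supported ℝ (↑Δ₁ : Set (Fin n)))
    (hg₁ : ∀ j, g₁ j ∈ MvPolynomial.supported ℝ (↑Δ₁ : Set (Fin n)))
    (hh₂ : ∀ j, h₂ j ∈ MvPolynomial.supported ℝ (↑Δ₂ : Set (Fin n)))
    (hg₂ : ∀ j, g₂ j ∈ MvPolynomial.supported ℝ (↑Δ₂ : Set (Fin n)))
    (K KΔ₁ KΔ₂ : Set (Fin n → ℝ))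
    (hKdef : K = { x | (∀ j, MvPolynomial.eval x (h₁ j) = 0) ∧
        (∀ j, 0 ≤ MvPolynomial.eval x (g₁ j)) ∧
        (∀ j, MvPolynomial.eval x (h₂ j) = 0) ∧
        (∀ j, 0 ≤ MvPolynomial.eval x (g₂ j)) })
    (hKΔ₁def : KΔ₁ = { x | (∀ j, MvPolynomial.eval x (h₁ j) = 0) ∧
        (∀ j, 0 ≤ MvPolynomial.eval x (g₁ j)) })
    (hKΔ₂def : KΔ₂ = { x | (∀ j, MvPolynomial.eval x (h₂ j) = 0) ∧
        (∀ j, 0 ≤ MvPolynomial.eval x (g₂ j)) })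
    (hKne : K.Nonempty)
    (fmin : ℝ)
    (hfmin : IsGLB ((fun x => MvPolynomial.eval x (f₁ + f₂)) '' K) fmin)
    -- `f₁` is bounded below on `K_{Δ₁}` and `f₂` is bounded below on `K_{Δ₂}`:
    (hbd₁ : BddBelow ((fun x => MvPolynomial.eval x f₁) '' KΔ₁))
    (hbd₂ : BddBelow ((fun x => MvPolynomial.eval x f₂) '' KΔ₂))
    -- the projections onto `Δ₁ ∩ Δ₂` are finite:
    (hfin₁ : Set.Finite (projTo n (Δ₁ ∩ Δ₂) '' KΔ₁))
    (hfin₂ : Set.Finite (projTo n (Δ₁ ∩ Δ₂) '' KΔ₂)) :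
    ∃ p : MvPolynomial (Fin n) ℝ,
      p ∈ MvPolynomial.supported ℝ (↑(Δ₁ ∩ Δ₂) : Set (Fin n)) ∧
      (∀ x ∈ KΔ₁, 0 ≤ MvPolynomial.eval x f₁ + MvPolynomial.eval x p) ∧
      (∀ x ∈ KΔ₂, 0 ≤ MvPolynomial.eval x f₂ - MvPolynomial.eval x p - fmin) ∧
      IsGLB ((fun x => MvPolynomial.eval x f₁ + MvPolynomial.eval x p) '' KΔ₁) 0 ∧
      IsGLB ((fun x => MvPolynomial.eval x f₂ - MvPolynomial.eval x p - fmin) '' KΔ₂) 0 := by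
  classical
  set π : (Fin n → ℝ) → ({a : Fin n // a ∈ Δ₁ ∩ Δ₂} → ℝ) := projTo n (Δ₁ ∩ Δ₂) with hπ
  have hKsub1 : K ⊆ KΔ₁ := by
    rw [hKdef, hKΔ₁def]; exact fun x hx => ⟨hx.1, hx.2.1⟩
  have hKsub2 : K ⊆ KΔ₂ := by
    rw [hKdef, hKΔ₂def]; exact fun x hx => ⟨hx.2.2.1, hx.2.2.2⟩
  set e₁ : (Fin n → ℝ) → ℝ := fun x => MvPolynomial.eval x f₁ with he₁
  set e₂ : (Fin n → ℝ) → ℝ := fun x => MvPolynomial.eval x f₂ with he₂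
  set F₁ : ({a : Fin n // a ∈ Δ₁ ∩ Δ₂} → ℝ) → ℝ :=
    fun z => sInf (e₁ '' {x ∈ KΔ₁ | π x = z}) with hF₁
  set F₂ : ({a : Fin n // a ∈ Δ₁ ∩ Δ₂} → ℝ) → ℝ :=
    fun z => sInf (e₂ '' {x ∈ KΔ₂ | π x = z}) with hF₂
  have hbb₁ : ∀ z, BddBelow (e₁ '' {x ∈ KΔ₁ | π x = z}) :=
    fun z => hbd₁.mono (Set.image_mono (Set.sep_subset _ _))
  have hbb₂ : ∀ z, BddBelow (e₂ '' {x ∈ KΔ₂ | π x = z}) :=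
    fun z => hbd₂.mono (Set.image_mono (Set.sep_subset _ _))
  have hF₁le : ∀ x ∈ KΔ₁, F₁ (π x) ≤ e₁ x :=
    fun x hx => csInf_le (hbb₁ _) ⟨x, ⟨hx, rfl⟩, rfl⟩
  have hF₂le : ∀ x ∈ KΔ₂, F₂ (π x) ≤ e₂ x :=
    fun x hx => csInf_le (hbb₂ _) ⟨x, ⟨hx, rfl⟩, rfl⟩
  -- gluing
  have hglue : ∀ x₁ ∈ KΔ₁, ∀ x₂ ∈ KΔ₂, π x₁ = π x₂ → fmin ≤ e₁ x₁ + e₂ x₂ := by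
    intro x₁ hx₁ x₂ hx₂ hπeq
    set y : Fin n → ℝ := fun i => if i ∈ Δ₁ then x₁ i else x₂ i with hy
    have hagr₁ : ∀ i ∈ Δ₁, y i = x₁ i := fun i hi => by simp [hy, hi]
    have hagr₂ : ∀ i ∈ Δ₂, y i = x₂ i := by
      intro i hi
      by_cases h : i ∈ Δ₁
      · have : x₁ i = x₂ i := congrFun hπeq ⟨i, Finset.mem_inter.mpr ⟨h, hi⟩⟩
        simp [hy, h, this]
      · simp [hy, h]
    have hy₁ : ∀ q ∈ MvPolynomial.supported ℝ (↑Δ₁ : Set (Fin n)),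
        MvPolynomial.eval y q = MvPolynomial.eval x₁ q :=
      fun q hq => eval_congr_supported hq hagr₁
    have hy₂ : ∀ q ∈ MvPolynomial.supported ℝ (↑Δ₂ : Set (Fin n)),
        MvPolynomial.eval y q = MvPolynomial.eval x₂ q :=
      fun q hq => eval_congr_supported hq hagr₂
    rw [hKΔ₁def] at hx₁
    rw [hKΔ₂def] at hx₂
    have hyK : y ∈ K := by
      rw [hKdef]
      refine ⟨fun j => ?_, fun j => ?_, fun j => ?_, fun j => ?_⟩
      · rw [hy₁ _ (hh₁ j)]; exact hx₁.1 j
      · rw [hy₁ _ (hg₁ j)]; exact hx₁.2 j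
      · rw [hy₂ _ (hh₂ j)]; exact hx₂.1 j
      · rw [hy₂ _ (hg₂ j)]; exact hx₂.2 j
    have := hfmin.1 ⟨y, hyK, rfl⟩
    simp only [map_add] at this
    rw [hy₁ _ hf₁, hy₂ _ hf₂] at this
    exact this
  have hF₁glue : ∀ x₂ ∈ KΔ₂, π x₂ ∈ π '' KΔ₁ → fmin - e₂ x₂ ≤ F₁ (π x₂) := by
    intro x₂ hx₂ hmem
    obtain ⟨x₀, hx₀, hπ₀⟩ := hmem
    refine le_csInf ⟨e₁ x₀, ⟨x₀, ⟨hx₀, hπ₀⟩, rfl⟩⟩ ?_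
    rintro b ⟨x₁, ⟨hx₁, hπ₁⟩, rfl⟩
    have := hglue x₁ hx₁ x₂ hx₂ hπ₁
    linarith
  -- interpolation
  set v : ({a : Fin n // a ∈ Δ₁ ∩ Δ₂} → ℝ) → ℝ :=
    fun z => if z ∈ π '' KΔ₁ then -F₁ z else F₂ z - fmin with hv
  obtain ⟨p, hpmem, hpeval⟩ := exists_interp (Δ₁ ∩ Δ₂) (π '' KΔ₁ ∪ π '' KΔ₂)
    (hfin₁.union hfin₂) v
  have hp₁ : ∀ x ∈ KΔ₁, MvPolynomial.eval x p = -F₁ (π x) := by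
    intro x hx
    rw [hpeval x (Or.inl ⟨x, hx, rfl⟩)]
    rw [hv]
    simp only [Set.mem_image]
    rw [if_pos ⟨x, hx, rfl⟩]
  have claim₁ : ∀ x ∈ KΔ₁, 0 ≤ MvPolynomial.eval x f₁ + MvPolynomial.eval x p := by
    intro x hx
    rw [hp₁ x hx]
    have := hF₁le x hx
    rw [he₁] at this
    linarith
  have claim₂ : ∀ x ∈ KΔ₂, 0 ≤ MvPolynomial.eval x f₂ - MvPolynomial.eval x p - fmin := by
    intro x hx
    by_cases h : π x ∈ π '' KΔ₁
    · have hpx : MvPolynomial.eval x p = -F₁ (π x) := by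
        rw [hpeval x (Or.inr ⟨x, hx, rfl⟩), hv]
        simp only
        rw [if_pos h]
      rw [hpx]
      have := hF₁glue x hx h
      rw [he₂] at this
      linarith
    · have hpx : MvPolynomial.eval x p = F₂ (π x) - fmin := by
        rw [hpeval x (Or.inr ⟨x, hx, rfl⟩), hv]
        simp only
        rw [if_neg h]
      rw [hpx]
      have := hF₂le x hx
      rw [he₂] at this
      linarith
  obtain ⟨x₀, hx₀K⟩ := hKne
  have hx₀₁ : x₀ ∈ KΔ₁ := hKsub1 hx₀K
  have hx₀₂ : x₀ ∈ KΔ₂ := hKsub2 hx₀K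
  refine ⟨p, hpmem, claim₁, claim₂, ?_, ?_⟩
  · constructor
    · rintro _ ⟨x, hx, rfl⟩
      exact claim₁ x hx
    · intro b hb
      have hlb : b + F₁ (π x₀) ∈ lowerBounds (e₁ '' {x ∈ KΔ₁ | π x = π x₀}) := by
        rintro _ ⟨x, ⟨hx, hπx⟩, rfl⟩
        have h1 : b ≤ MvPolynomial.eval x f₁ + MvPolynomial.eval x p :=
          hb ⟨x, hx, rfl⟩
        rw [hp₁ x hx, hπx] at h1
        rw [he₁]
        linarith
      have h2 : b + F₁ (π x₀) ≤ F₁ (π x₀) :=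
        le_csInf ⟨e₁ x₀, ⟨x₀, ⟨hx₀₁, rfl⟩, rfl⟩⟩ hlb
      linarith
  · constructor
    · rintro _ ⟨x, hx, rfl⟩
      exact claim₂ x hx
    · intro b hb
      have hlbK : fmin + b ∈ lowerBounds ((fun x => MvPolynomial.eval x (f₁ + f₂)) '' K) := by
        rintro _ ⟨x, hxK, rfl⟩
        have hx1 : x ∈ KΔ₁ := hKsub1 hxK
        have hx2 : x ∈ KΔ₂ := hKsub2 hxK
        have h1 : b ≤ MvPolynomial.eval x f₂ - MvPolynomial.eval x p - fmin :=
          hb ⟨x, hx2, rfl⟩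
        rw [hp₁ x hx1] at h1
        have h2 := hF₁le x hx1
        rw [he₁] at h2
        simp only [map_add]
        linarith
      have := hfmin.2 hlbK
      linarith
end
end
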